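/- arXiv:2410.17837 — 6 statements merged into one kernel-verified Lean document; each statement's English description precedes it below -/
import Mathlib

section
/- Let G be a connected finite simple graph and H an induced subgraph of G with rank A(H) ≥ rank A(G) − 1. Let v be a vertex of G not in H and h a vertex of H such that v and h are not adjacent in G and N_H(v) = N_H(h) (v and h have the same neighbors among the vertices of H). Then N_G(v) = N_G(h). -/
open Classical in
/-- The adjacency matrix of a finite simple graph over `ℝ`. -/
noncomputable def adjMat {V : Type} [Fintype V] (G : SimpleGraph V) : Matrix V V ℝ :=
  Matrix.of fun i j => if G.Adj i j then (1 : ℝ) else 0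

/-!
Suppose a vertex `w` is adjacent to exactly one of `v`, `h`. Subtracting row and column `h`
of `A(G)` from row and column `v` gives a matrix `B` of rank at most `rank A(G)` which still
agrees with `A(H)` on `S`, vanishes on row and column `v` inside `S ∪ {v}` (twins, `v ≁ h`),
and has `B v w = B w v ≠ 0`. These two pivots lie outside the `S × S` block and each raises the
rank by one, so `rank A(G) ≥ rank A(H) + 2`.
-/

open Module Submodule Set

namespace Matrix

variable {K m n m' n' : Type*} [Field K]

theorem rank_submatrix_add_one_le_of_row_eq_zero [Fintype n] [Fintype n'] (M : Matrix m n K)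
    (r : m' → m) (s : n' → n) {i : m} {j : n} (hij : M i j ≠ 0) (hrow : ∀ y, M i (s y) = 0) :
    (M.submatrix r s).rank + 1 ≤ M.rank := by
  set U := span K (range (M.submatrix id s).col)
  have hU_ker : U ≤ LinearMap.ker (LinearMap.proj i : (m → K) →ₗ[K] K) :=
    span_le.2 <| by rintro _ ⟨y, rfl⟩; exact hrow y
  have hU : U < span K (range M.col) :=
    (span_mono <| by rintro _ ⟨y, rfl⟩; exact ⟨s y, rfl⟩).lt_of_not_ge
      fun hle => hij <| hU_ker <| hle <| subset_span ⟨j, rfl⟩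
  have := Module.Finite.span_of_finite K (finite_range M.col)
  calc (M.submatrix r s).rank + 1 ≤ (M.submatrix id s).rank + 1 := by
        gcongr; exact rank_submatrix_le (M.submatrix id s) r id
    _ = finrank K U + 1 := by rw [rank_eq_finrank_span_cols]
    _ ≤ finrank K (span K (range M.col)) := finrank_lt_finrank_of_lt hU
    _ = M.rank := (rank_eq_finrank_span_cols M).symm

theorem rank_submatrix_add_one_le_of_col_eq_zero [Fintype m] [Fintype n] [Fintype m']
    [Fintype n'] (M : Matrix m n K) (r : m' → m) (s : n' → n) {i : m} {j : n} (hij : M i j ≠ 0)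
    (hcol : ∀ x, M (r x) j = 0) :
    (M.submatrix r s).rank + 1 ≤ M.rank := by
  simpa only [← transpose_submatrix, rank_transpose] using
    Mᵀ.rank_submatrix_add_one_le_of_row_eq_zero s r (i := j) (j := i) hij hcol

theorem rank_submatrix_add_two_le [Fintype m] [Fintype n] [Fintype m'] [Fintype n']
    (M : Matrix m n K) (r : m' → m) (s : n' → n) {i₁ i₂ : m} {j₁ j₂ : n}
    (h₁ : M i₁ j₁ ≠ 0) (hcol : ∀ x, M (r x) j₁ = 0) (hi₂j₁ : M i₂ j₁ = 0)
    (h₂ : M i₂ j₂ ≠ 0) (hrow : ∀ y, M i₂ (s y) = 0) :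
    (M.submatrix r s).rank + 2 ≤ M.rank := by
  set N := M.submatrix (fun x : Option m' => x.elim i₂ r) (fun y : Option n' => y.elim j₂ s)
  have h₂N : (M.submatrix r s).rank + 1 ≤ N.rank :=
    N.rank_submatrix_add_one_le_of_row_eq_zero some some (i := none) (j := none) h₂ hrow
  have h₁N : N.rank + 1 ≤ M.rank :=
    M.rank_submatrix_add_one_le_of_col_eq_zero _ _ h₁ (by rintro (_ | x) <;> simp [*])
  omega

end Matrix

open Matrix

section adjMat

variable {V : Type} [Fintype V] (G : SimpleGraph V)

theorem adjMat_comm (i j : V) : adjMat G i j = adjMat G j i := by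
  simp only [adjMat, of_apply]
  congr 1
  exact propext (G.adj_comm i j)

theorem adjMat_sub_adjMat_eq_zero_iff (a b x : V) :
    adjMat G a x - adjMat G b x = 0 ↔ (G.Adj a x ↔ G.Adj b x) := by
  simp only [adjMat, of_apply]
  split_ifs <;> simp_all

theorem rank_induce_add_two_le_of_twin (S : Set V) [Fintype S] {v h w : V} (hv : v ∉ S)
    (hvh : ¬G.Adj v h) (hN : ∀ u ∈ S, G.Adj v u ↔ G.Adj h u) (hw : ¬(G.Adj v w ↔ G.Adj h w)) :
    (adjMat (G.induce S)).rank + 2 ≤ (adjMat G).rank := by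
  classical
  have hwv : w ≠ v := by
    rintro rfl
    exact hw (iff_of_false G.irrefl (mt G.adj_symm hvh))
  have hSv : ∀ u : S, (u : V) ≠ v := fun u huv => hv (huv ▸ u.2)
  set B := transvection v h (-1) * adjMat G * transvection h v (-1)
  have hBS : B.submatrix (↑) (↑) = adjMat (G.induce S) := by
    ext u u'
    simp [B, hSv, adjMat]
  have hBwv : B w v ≠ 0 := by
    simpa [B, hwv, ← sub_eq_add_neg, adjMat_comm G w, adjMat_sub_adjMat_eq_zero_iff] using hw
  have hBvw : B v w ≠ 0 := by
    simpa [B, hwv, ← sub_eq_add_neg, adjMat_sub_adjMat_eq_zero_iff] using hw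
  have hBSv : ∀ u : S, B u v = 0 := by
    intro u
    simpa [B, hSv, ← sub_eq_add_neg, adjMat_comm G u, adjMat_sub_adjMat_eq_zero_iff] using hN u u.2
  have hBvS : ∀ u : S, B v u = 0 := by
    intro u
    simpa [B, hSv, ← sub_eq_add_neg, adjMat_sub_adjMat_eq_zero_iff] using hN u u.2
  have hBvv : B v v = 0 := by
    simp [B, adjMat, hvh, mt G.adj_symm hvh]
  calc (adjMat (G.induce S)).rank + 2 ≤ B.rank :=
        hBS ▸ B.rank_submatrix_add_two_le _ _ hBwv hBSv hBvv hBvw hBvS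
    _ ≤ (adjMat G).rank := (rank_mul_le_left _ _).trans (rank_mul_le_right _ _)

end adjMat

theorem stmt4_general {V : Type} [Fintype V] (G : SimpleGraph V)
    (S : Set V) [Fintype S]
    (hrank : (adjMat G).rank ≤ (adjMat (G.induce S)).rank + 1)
    (v h : V) (hv : v ∉ S) (hvh : ¬ G.Adj v h)
    (hN : ∀ u ∈ S, G.Adj v u ↔ G.Adj h u) :
    G.neighborSet v = G.neighborSet h := by
  ext w
  by_contra hw
  have := rank_induce_add_two_le_of_twin G S hv hvh hN hw
  omega

/-- If `H = G[S]` is an induced subgraph of a connected graph `G` with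
`rank A(H) ≥ rank A(G) - 1`, and `v ∉ S`, `h ∈ S` are non-adjacent vertices with the
same neighbours among the vertices of `H`, then `N_G(v) = N_G(h)`. -/
theorem stmt4 {V : Type} [Fintype V] (G : SimpleGraph V) (hG : G.Connected)
    (S : Set V) [Fintype S]
    (hrank : (adjMat G).rank ≤ (adjMat (G.induce S)).rank + 1)
    (v h : V) (hv : v ∉ S) (hh : h ∈ S) (hvh : ¬ G.Adj v h)
    (hN : ∀ u ∈ S, G.Adj v u ↔ G.Adj h u) :
    G.neighborSet v = G.neighborSet h :=
  stmt4_general G S hrank v h hv hvh hN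
end

section
/- Let G be a finite simple graph containing a pendant vertex u (a vertex of degree exactly 1) whose unique neighbor is w. Then η(G) = η(G − u − w), where G − u − w is the induced subgraph obtained by deleting both u and w. -/
/-- The nullity `η(G)` of a finite simple graph: the dimension of the kernel of
its adjacency matrix over `ℝ`. -/
noncomputable def nullity {V : Type} [Fintype V] (G : SimpleGraph V) : ℕ :=
  Module.finrank ℝ (LinearMap.ker (adjMat G).mulVecLin)

lemma sum_split {V : Type} [Fintype V] [DecidableEq V] (u w : V) (huw : u ≠ w) (f : V → ℝ) :
    ∑ y, f y = f u + f w + ∑ y : {x : V | x ≠ u ∧ x ≠ w}, f (y : V) := by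
  classical
  have h : ∑ y : {x : V | x ≠ u ∧ x ≠ w}, f (y : V)
      = ∑ y ∈ (Finset.univ.erase u).erase w, f y := by
    rw [Finset.sum_subtype (p := fun x => x ∈ {x : V | x ≠ u ∧ x ≠ w})
      ((Finset.univ.erase u).erase w) (fun x => by simp [Set.mem_setOf_eq, and_comm]) f]
  rw [h, ← Finset.add_sum_erase _ f (Finset.mem_univ u),
    ← Finset.add_sum_erase _ f (Finset.mem_erase.2 ⟨huw.symm, Finset.mem_univ w⟩), add_assoc]

/-- If `u` is a pendant vertex of `G` (degree exactly one) with unique neighbour `w`,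
then `η(G) = η(G - u - w)`. -/
theorem stmt7 {V : Type} [Fintype V] [DecidableEq V] (G : SimpleGraph V)
    (u w : V) (hadj : G.Adj u w) (huniq : ∀ x : V, G.Adj u x → x = w) :
    nullity G = nullity (G.induce {x : V | x ≠ u ∧ x ≠ w}) := by
  classical
  set S := {x : V | x ≠ u ∧ x ≠ w} with hS
  have huw : u ≠ w := hadj.ne
  have entry : ∀ i j : V, adjMat G i j = if G.Adj i j then (1:ℝ) else 0 := fun i j => by
    simp [adjMat]
  have entryS : ∀ i j : S, adjMat (G.induce S) i j = if G.Adj (i:V) (j:V) then (1:ℝ) else 0 :=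
    fun i j => by
      simp only [adjMat, Matrix.of_apply, SimpleGraph.comap_adj, Function.Embedding.coe_subtype]
  have memker : ∀ x : V → ℝ, x ∈ LinearMap.ker (adjMat G).mulVecLin ↔
      ∀ v : V, ∑ y, (if G.Adj v y then (1:ℝ) else 0) * x y = 0 := by
    intro x
    rw [LinearMap.mem_ker, funext_iff]
    refine forall_congr' fun v => ?_
    simp only [Matrix.mulVecLin_apply, Matrix.mulVec, dotProduct, entry, Pi.zero_apply]
  have memkerS : ∀ x : S → ℝ, x ∈ LinearMap.ker (adjMat (G.induce S)).mulVecLin ↔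
      ∀ v : S, ∑ y : S, (if G.Adj (v:V) (y:V) then (1:ℝ) else 0) * x y = 0 := by
    intro x
    rw [LinearMap.mem_ker, funext_iff]
    refine forall_congr' fun v => ?_
    simp only [Matrix.mulVecLin_apply, Matrix.mulVec, dotProduct, entryS, Pi.zero_apply]
  have adj_u : ∀ y : V, G.Adj u y ↔ y = w := fun y => ⟨huniq y, fun h => h ▸ hadj⟩
  have nadj_u : ∀ v : S, ¬ G.Adj (v:V) u := fun v h => v.2.2 (huniq _ h.symm)
  have keyw : ∀ x : V → ℝ, (∀ v : V, ∑ y, (if G.Adj v y then (1:ℝ) else 0) * x y = 0) →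
      x w = 0 := by
    intro x hk
    have h0 := hk u
    have heq : ∀ y : V, (if G.Adj u y then (1:ℝ) else 0) * x y = if y = w then x w else 0 := by
      intro y
      by_cases h : y = w
      · subst h; simp [hadj]
      · simp [h, (adj_u y).not.2 h]
    rw [Finset.sum_congr rfl (fun y _ => heq y)] at h0
    simpa using h0
  have keyu : ∀ x : V → ℝ, (∀ v : V, ∑ y, (if G.Adj v y then (1:ℝ) else 0) * x y = 0) →
      x u + ∑ y : S, (if G.Adj w (y:V) then (1:ℝ) else 0) * x (y:V) = 0 := by
    intro x hk
    have h0 := hk w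
    rw [sum_split u w huw] at h0
    simpa [hadj.symm, G.irrefl] using h0
  have keyrow : ∀ x : V → ℝ, x w = 0 →
      (∀ v : V, ∑ y, (if G.Adj v y then (1:ℝ) else 0) * x y = 0) →
      ∀ v : S, ∑ y : S, (if G.Adj (v:V) (y:V) then (1:ℝ) else 0) * x (y:V) = 0 := by
    intro x hw hk v
    have h0 := hk (v:V)
    rw [sum_split u w huw] at h0
    simpa [nadj_u v, hw] using h0
  set MG := LinearMap.ker (adjMat G).mulVecLin
  set MS := LinearMap.ker (adjMat (G.induce S)).mulVecLin
  have maps : ∀ x : MG, (fun v : S => (x : V → ℝ) (v:V)) ∈ MS := by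
    intro x
    rw [memkerS]
    exact keyrow x (keyw x ((memker x).1 x.2)) ((memker x).1 x.2)
  let Φ : MG →ₗ[ℝ] MS :=
    ((LinearMap.funLeft ℝ ℝ (Subtype.val : S → V)).comp MG.subtype).codRestrict MS maps
  have hΦ : ∀ (x : MG) (z : S), ((Φ x : S → ℝ)) z = (x : V → ℝ) (z:V) := fun x z => rfl
  have hinj : Function.Injective Φ := by
    intro x y hxy
    have hxy' : ∀ v : S, (x : V → ℝ) (v:V) = (y : V → ℝ) (v:V) := by
      intro v
      rw [← hΦ x v, ← hΦ y v, hxy]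
    have hxk := (memker x).1 x.2
    have hyk := (memker y).1 y.2
    have hxw := keyw x hxk
    have hyw := keyw y hyk
    have hxu := keyu x hxk
    have hyu := keyu y hyk
    ext v
    by_cases hu : v = u
    · rw [hu]
      have hsum : ∑ z : S, (if G.Adj w (z:V) then (1:ℝ) else 0) * (x : V → ℝ) (z:V)
          = ∑ z : S, (if G.Adj w (z:V) then (1:ℝ) else 0) * (y : V → ℝ) (z:V) :=
        Finset.sum_congr rfl fun z _ => by rw [hxy' z]
      linarith [hxu, hyu]
    · by_cases hw : v = w
      · rw [hw, hxw, hyw]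
      · exact hxy' ⟨v, hu, hw⟩
  have hsurj : Function.Surjective Φ := by
    intro y
    set a : ℝ := -(∑ z : S, (if G.Adj w (z:V) then (1:ℝ) else 0) * (y : S → ℝ) z) with ha
    set x : V → ℝ := fun t => if ht : t = u then a else if ht' : t = w then 0
      else (y : S → ℝ) ⟨t, ht, ht'⟩ with hx
    have hxu : x u = a := by simp [hx]
    have hxw : x w = 0 := by simp [hx, huw.symm]
    have hxS : ∀ z : S, x (z:V) = (y : S → ℝ) z := by
      intro z
      simp [hx, z.2.1, z.2.2]
    have hxk : x ∈ MG := by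
      rw [memker]
      intro v
      rw [sum_split u w huw]
      by_cases hu : v = u
      · rw [hu]
        have h1 : ∀ z : S, (if G.Adj u (z:V) then (1:ℝ) else 0) * x (z:V) = 0 := fun z => by
          simp [(adj_u (z:V)).not.2 z.2.2]
        rw [Finset.sum_congr rfl fun z _ => h1 z]
        simp [G.irrefl, hadj, hxw]
      · by_cases hw : v = w
        · rw [hw]
          have h1 : ∀ z : S, (if G.Adj w (z:V) then (1:ℝ) else 0) * x (z:V)
              = (if G.Adj w (z:V) then (1:ℝ) else 0) * (y : S → ℝ) z := fun z => by rw [hxS z]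
          rw [Finset.sum_congr rfl fun z _ => h1 z]
          simp [hxu, ha, hadj.symm, G.irrefl]
        · have h0 := (memkerS y).1 y.2 ⟨v, hu, hw⟩
          have h1 : ∀ z : S, (if G.Adj v (z:V) then (1:ℝ) else 0) * x (z:V)
              = (if G.Adj v (z:V) then (1:ℝ) else 0) * (y : S → ℝ) z := fun z => by rw [hxS z]
          rw [Finset.sum_congr rfl fun z _ => h1 z]
          simpa [nadj_u ⟨v, hu, hw⟩, hxw] using h0
    exact ⟨⟨x, hxk⟩, Subtype.ext (funext fun z => hxS z)⟩
  have e : MG ≃ₗ[ℝ] MS := LinearEquiv.ofBijective Φ ⟨hinj, hsurj⟩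
  exact e.finrank_eq
end

section
/- Let G be a connected finite simple graph on n vertices whose diameter d(G) = 2k + 1 is odd. Then rank A(G) ≥ d(G) + 1; equivalently, η(G) ≤ n − d(G) − 1. -/
/-!
Let `d = d(G)` and let `v₀, …, v_d` be a shortest walk between two vertices at distance `d`.
Since `dist vᵢ vⱼ = |i - j|`, these vertices induce the path `P_{d+1}`, so `A(P_{d+1})` is a
principal submatrix of `A(G)` and `rank A(G) ≥ rank A(P_{d+1})`. A kernel vector `x` of
`A(P_{d+1})`, padded by `x₋₁ = x_{d+1} = 0`, satisfies `x_{m-1} + x_{m+1} = 0` for `0 ≤ m ≤ d`;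
starting from the two zero ends this kills the entries of both parities when `d + 1` is even.
Hence `A(P_{d+1})` is invertible, and rank–nullity gives the bound on `η(G)`.
-/

section Recurrence

variable {M : Type*} [AddGroup M] {c : ℕ → M} {n : ℕ}

lemma add_two_mul_eq_zero_of_add_add_two_eq_zero (hc : ∀ m < n, c m + c (m + 2) = 0) {a : ℕ}
    (ha : c a = 0) (t : ℕ) (ht : a + 2 * t ≤ n + 1) : c (a + 2 * t) = 0 := by
  induction t with
  | zero => simpa using ha
  | succ t ih =>
    rw [show a + 2 * (t + 1) = a + 2 * t + 2 by ring,
      eq_neg_of_add_eq_zero_right (hc (a + 2 * t) (by omega)), ih (by omega), neg_zero]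

lemma eq_zero_of_add_add_two_eq_zero_of_even (hn : Even n) (hc : ∀ m < n, c m + c (m + 2) = 0)
    (h_zero : c 0 = 0) (h_succ : c (n + 1) = 0) {k : ℕ} (hk : k ≤ n + 1) : c k = 0 := by
  obtain ⟨t, rfl | rfl⟩ := k.even_or_odd'
  · simpa using add_two_mul_eq_zero_of_add_add_two_eq_zero hc h_zero t (by omega)
  · obtain ⟨s, rfl⟩ := hn
    have hrev : ∀ m < s + s, c (s + s + 1 - m) + c (s + s + 1 - (m + 2)) = 0 := fun m hm => by
      have := hc (s + s + 1 - (m + 2)) (by omega)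
      rw [show s + s + 1 - (m + 2) + 2 = s + s + 1 - m by omega] at this
      exact add_eq_zero_symm this
    have := add_two_mul_eq_zero_of_add_add_two_eq_zero (c := fun m => c (s + s + 1 - m)) hrev
      (a := 0) (by simpa using h_succ) (s - t) (by omega)
    simpa [show s + s + 1 - 2 * (s - t) = 2 * t + 1 by omega] using this

end Recurrence

section PathGraph

open SimpleGraph

variable {M : Type*} [AddCommMonoid M] {n : ℕ}

/-- The shift by one makes row `m` of `A(Pₙ) x` read `shiftPad x m + shiftPad x (m + 2)`,
with no truncated subtraction. -/
def shiftPad (x : Fin n → M) (k : ℕ) : M :=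
  if h : 0 < k ∧ k ≤ n then x ⟨k - 1, by omega⟩ else 0

lemma shiftPad_zero (x : Fin n → M) : shiftPad x 0 = 0 := by
  simp [shiftPad]

lemma shiftPad_of_lt (x : Fin n → M) {k : ℕ} (hk : n < k) : shiftPad x k = 0 := by
  simp only [shiftPad, dite_eq_right_iff]
  omega

lemma shiftPad_succ (x : Fin n → M) (i : Fin n) : shiftPad x (i + 1) = x i := by
  simp [shiftPad]

lemma sum_ite_eq_shiftPad (x : Fin n → M) (a : ℕ) :
    ∑ j : Fin n, (if a = j then x j else 0) = shiftPad x (a + 1) := by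
  by_cases ha : a < n
  · rw [Finset.sum_eq_single ⟨a, ha⟩ (fun j _ hj => if_neg fun h => hj (Fin.ext h.symm))
      (by simp), if_pos rfl, ← shiftPad_succ x ⟨a, ha⟩]
  · rw [shiftPad_of_lt x (by omega), Finset.sum_eq_zero fun j _ => if_neg (by omega)]

lemma adjMat_pathGraph_mulVec_apply (x : Fin n → ℝ) (m : Fin n) :
    (adjMat (pathGraph n)).mulVec x m = shiftPad x m + shiftPad x (m + 2) := by
  classical
  have hrow : (adjMat (pathGraph n)).mulVec x m = ∑ j : Fin n,
      ((if (m : ℕ) + 1 = j then x j else 0) + (if (m : ℕ) = j + 1 then x j else 0)) := by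
    simp only [Matrix.mulVec, dotProduct]
    refine Finset.sum_congr rfl fun j _ => ?_
    simp only [adjMat, Matrix.of_apply, pathGraph_adj]
    split_ifs <;> first | omega | ring
  rw [hrow, Finset.sum_add_distrib, sum_ite_eq_shiftPad, add_comm]
  obtain ⟨_ | k, hk⟩ := m
  · simp [shiftPad_zero]
  · simp only [Nat.add_right_cancel_iff, sum_ite_eq_shiftPad]

lemma adjMat_pathGraph_mulVec_injective (hn : Even n) :
    Function.Injective (adjMat (pathGraph n)).mulVec := by
  rw [← Matrix.coe_mulVecLin, ← LinearMap.ker_eq_bot, LinearMap.ker_eq_bot']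
  intro x hx
  have hrec : ∀ m < n, shiftPad x m + shiftPad x (m + 2) = 0 := fun m hm => by
    simpa [adjMat_pathGraph_mulVec_apply] using congrFun hx ⟨m, hm⟩
  ext i
  rw [← shiftPad_succ x i]
  exact eq_zero_of_add_add_two_eq_zero_of_even hn hrec (shiftPad_zero x)
    (shiftPad_of_lt x (by omega)) (by omega)

lemma rank_adjMat_pathGraph (hn : Even n) : (adjMat (pathGraph n)).rank = n := by
  classical
  rw [Matrix.rank_of_isUnit _ (Matrix.mulVec_injective_iff_isUnit.mp
    (adjMat_pathGraph_mulVec_injective hn)), Fintype.card_fin]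

end PathGraph

section InducedSubgraph

variable {V W : Type} [Fintype V] [Fintype W] {G : SimpleGraph V} {H : SimpleGraph W}

lemma adjMat_submatrix_embedding (f : H ↪g G) : (adjMat G).submatrix f f = adjMat H := by
  classical
  ext i j
  exact if_congr f.map_adj_iff rfl rfl

lemma rank_adjMat_le_of_embedding (f : H ↪g G) : (adjMat H).rank ≤ (adjMat G).rank := by
  rw [← adjMat_submatrix_embedding f]
  exact Matrix.rank_submatrix_le _ _ _

end InducedSubgraph

lemma rank_adjMat_add_nullity {V : Type} [Fintype V] (G : SimpleGraph V) :
    (adjMat G).rank + nullity G = Fintype.card V := by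
  rw [Matrix.rank, nullity, LinearMap.finrank_range_add_finrank_ker,
    Module.finrank_fintype_fun_eq_card]

namespace SimpleGraph.Walk

variable {V : Type} {G : SimpleGraph V} {u v : V} {p : G.Walk u v}

lemma dist_getVert_of_length_eq_dist (hp : p.length = G.dist u v) {i j : ℕ} (hij : i ≤ j)
    (hj : j ≤ p.length) : G.dist (p.getVert i) (p.getVert j) = j - i := by
  have hsub := ((p.drop i).isSubwalk_take (j - i)).trans (p.isSubwalk_drop i)
  have : G.dist (p.getVert i) ((p.drop i).getVert (j - i)) = j - i := by
    rw [← length_eq_dist_of_subwalk hp hsub, take_length, drop_length]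
    omega
  rwa [drop_getVert, Nat.add_sub_cancel' hij] at this

lemma dist_getVert_getVert_of_length_eq_dist (hp : p.length = G.dist u v) {i j : ℕ}
    (hi : i ≤ p.length) (hj : j ≤ p.length) : G.dist (p.getVert i) (p.getVert j) = i.dist j := by
  rcases le_total i j with hij | hij
  · rw [dist_getVert_of_length_eq_dist hp hij hj, Nat.dist_eq_sub_of_le hij]
  · rw [dist_comm, dist_getVert_of_length_eq_dist hp hij hi, Nat.dist_eq_sub_of_le_right hij]

def pathGraphEmbedding (p : G.Walk u v) (hp : p.length = G.dist u v) :
    pathGraph (p.length + 1) ↪g G where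
  toFun i := p.getVert i
  inj' i j (hij : p.getVert i = p.getVert j) := by
    have := p.dist_getVert_getVert_of_length_eq_dist hp (i := i) (j := j) (by omega) (by omega)
    rw [hij, dist_self, Nat.dist] at this
    omega
  map_rel_iff' {i j} := by
    change G.Adj (p.getVert i) (p.getVert j) ↔ _
    rw [← dist_eq_one_iff_adj, pathGraph_adj,
      p.dist_getVert_getVert_of_length_eq_dist hp (by omega) (by omega), Nat.dist]
    omega

end SimpleGraph.Walk

theorem stmt9_general {V : Type} [Fintype V] (G : SimpleGraph V)
    (hodd : Odd G.diam) :
    G.diam + 1 ≤ (adjMat G).rank ∧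
    nullity G ≤ Fintype.card V - G.diam - 1 := by
  have hd : G.diam ≠ 0 := hodd.pos.ne'
  have : Nontrivial V := G.nontrivial_of_diam_ne_zero hd
  obtain ⟨u, v, huv⟩ := G.exists_dist_eq_diam
  obtain ⟨p, hp⟩ := SimpleGraph.exists_walk_of_dist_ne_zero (huv ▸ hd)
  have hrank : G.diam + 1 ≤ (adjMat G).rank :=
    calc G.diam + 1 = (adjMat (SimpleGraph.pathGraph (p.length + 1))).rank := by
          rw [rank_adjMat_pathGraph (by rw [hp, huv]; exact hodd.add_one), hp, huv]
      _ ≤ (adjMat G).rank := rank_adjMat_le_of_embedding (p.pathGraphEmbedding hp)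
  have := rank_adjMat_add_nullity G
  omega

/-- If `G` is connected with odd diameter `d(G) = 2k + 1`, then
`rank A(G) ≥ d(G) + 1`; equivalently, `η(G) ≤ n - d(G) - 1`. -/
theorem stmt9 {V : Type} [Fintype V] (G : SimpleGraph V)
    (hG : G.Connected) (hodd : Odd G.diam) :
    G.diam + 1 ≤ (adjMat G).rank ∧
    nullity G ≤ Fintype.card V - G.diam - 1 :=
  stmt9_general G hodd
end

section
/- Let G be a connected finite simple graph on n vertices with even diameter d, let P = v_1 ∼ v_2 ∼ ⋯ ∼ v_{d+1} be a diameter path of G, and suppose η(G) = n − d − 1. If a vertex x of G not on P has exactly one neighbor on P, say v_m, then m is even. -/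
namespace Stmt13Aux

lemma sum_ind {N : ℕ} (u : Fin N → ℝ) (t : ℕ) (ht : t < N) :
    (∑ j : Fin N, if (j : ℕ) = t then u j else 0) = u ⟨t, ht⟩ := by
  have h : ∀ j : Fin N, ((j : ℕ) = t) = (j = ⟨t, ht⟩) := by
    intro j
    rw [Fin.ext_iff]
  simp_rw [h]
  exact Fintype.sum_ite_eq' _ _

/-- The shifted coordinate function: `aux d u t = u (t-1)` for `1 ≤ t ≤ d+1`, else `0`. -/
noncomputable def aux (d : ℕ) (u : Fin (d + 2) → ℝ) (t : ℕ) : ℝ :=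
  if h : 1 ≤ t ∧ t ≤ d + 1 then u ⟨t - 1, by omega⟩ else 0

lemma aux_out (d : ℕ) (u : Fin (d + 2) → ℝ) (t : ℕ) (ht : ¬(1 ≤ t ∧ t ≤ d + 1)) :
    aux d u t = 0 := dif_neg ht

lemma sum_shift (d : ℕ) (u : Fin (d + 2) → ℝ) (s : ℕ) (hs : s ≤ d + 1) :
    (∑ j : Fin (d + 2), if (j : ℕ) + 1 = s then u j else 0) = aux d u s := by
  rcases Nat.eq_zero_or_pos s with h0 | h1
  · subst h0
    rw [aux, dif_neg (by omega)]
    exact Finset.sum_eq_zero fun j _ => if_neg (by omega)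
  · rw [aux, dif_pos ⟨h1, hs⟩]
    have h : ∀ j : Fin (d + 2), ((j : ℕ) + 1 = s) = (j = ⟨s - 1, by omega⟩) := by
      intro j
      rw [Fin.ext_iff]
      show _ = ((j : ℕ) = s - 1)
      apply propext
      omega
    simp_rw [h]
    exact Fintype.sum_ite_eq' _ _

/-- The key linear algebra fact: the adjacency matrix of an (even) path on `d+1`
vertices with an extra pendant vertex attached at (even 0-indexed) position `mv`
is nonsingular. -/
lemma key (d mv : ℕ) (hd : Even d) (hmv : Even mv) (hmd : mv ≤ d)
    (B : Matrix (Fin (d + 2)) (Fin (d + 2)) ℝ)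
    (hB : ∀ (iv jv : ℕ) (hiv : iv < d + 2) (hjv : jv < d + 2),
      B ⟨iv, hiv⟩ ⟨jv, hjv⟩ =
        if (iv ≤ d ∧ jv ≤ d ∧ (iv + 1 = jv ∨ jv + 1 = iv))
            ∨ (iv = d + 1 ∧ jv = mv) ∨ (jv = d + 1 ∧ iv = mv)
        then (1 : ℝ) else 0) :
    LinearMap.ker B.mulVecLin = ⊥ := by
  rw [LinearMap.ker_eq_bot']
  intro u hu
  rw [Matrix.mulVecLin_apply] at hu
  have hrowsum : ∀ (iv : ℕ) (hiv : iv < d + 2),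
      (∑ j : Fin (d + 2), B ⟨iv, hiv⟩ j * u j) = 0 := by
    intro iv hiv
    have h := congrFun hu ⟨iv, hiv⟩
    simpa [Matrix.mulVec, dotProduct] using h
  -- path rows
  have hrow : ∀ i : ℕ, i ≤ d →
      aux d u i + aux d u (i + 2) + (if i = mv then u ⟨d + 1, by omega⟩ else 0) = 0 := by
    intro i hi
    have hs := hrowsum i (by omega)
    have hsplit : ∀ j : Fin (d + 2), B ⟨i, by omega⟩ j * u j =
        (if (j : ℕ) + 1 = i then u j else 0) +
        ((if (j : ℕ) + 1 = i + 2 ∧ i + 1 ≤ d then u j else 0) +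
         (if (j : ℕ) = d + 1 ∧ i = mv then u j else 0)) := by
      intro j
      have hj := j.isLt
      have hBij := hB i (j : ℕ) (by omega) (by omega)
      rw [Fin.eta] at hBij
      rw [hBij]
      split_ifs <;> first | ring1 | (exfalso; omega)
    rw [Finset.sum_congr rfl (fun j _ => hsplit j)] at hs
    rw [Finset.sum_add_distrib, Finset.sum_add_distrib] at hs
    rw [sum_shift d u i (by omega)] at hs
    have h2 : (∑ j : Fin (d + 2), if (j : ℕ) + 1 = i + 2 ∧ i + 1 ≤ d then u j else 0)
        = aux d u (i + 2) := by
      by_cases hc : i + 1 ≤ d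
      · simp only [hc, and_true]
        exact sum_shift d u (i + 2) (by omega)
      · rw [aux_out d u (i + 2) (by omega)]
        exact Finset.sum_eq_zero fun j _ => if_neg (by tauto)
    rw [h2] at hs
    have h3 : (∑ j : Fin (d + 2), if (j : ℕ) = d + 1 ∧ i = mv then u j else 0)
        = if i = mv then u ⟨d + 1, by omega⟩ else 0 := by
      by_cases hc : i = mv
      · simp only [hc, and_true, if_true]
        exact sum_ind u (d + 1) (by omega)
      · simp only [hc, and_false, if_false]
        exact Finset.sum_eq_zero fun j _ => rfl
    rw [h3] at hs
    linarith [hs]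
  -- the pendant row
  have hxr : aux d u (mv + 1) = 0 := by
    have hs := hrowsum (d + 1) (by omega)
    have hsplit : ∀ j : Fin (d + 2), B ⟨d + 1, by omega⟩ j * u j =
        (if (j : ℕ) = mv then u j else 0) := by
      intro j
      have hj := j.isLt
      have hBij := hB (d + 1) (j : ℕ) (by omega) (by omega)
      rw [Fin.eta] at hBij
      rw [hBij]
      split_ifs <;> first | ring1 | (exfalso; omega)
    rw [Finset.sum_congr rfl (fun j _ => hsplit j), sum_ind u mv (by omega)] at hs
    rw [aux, dif_pos ⟨by omega, by omega⟩]
    exact hs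
  obtain ⟨dc, hdc⟩ := hd
  obtain ⟨mc, hmc⟩ := hmv
  -- chain 1 : odd positions above mv+1
  have C1 : ∀ k, aux d u (mv + 1 + 2 * k) = 0 := by
    intro k
    induction k with
    | zero => simpa using hxr
    | succ k ih =>
      by_cases hc : mv + 1 + 2 * k ≤ d
      · have h := hrow (mv + 1 + 2 * k) hc
        rw [if_neg (by omega)] at h
        have e : mv + 1 + 2 * (k + 1) = (mv + 1 + 2 * k) + 2 := by ring
        rw [e]
        linarith [ih, h]
      · exact aux_out _ _ _ (by omega)
  -- chain 2 : odd positions below mv+1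
  have C2 : ∀ k, aux d u (mv + 1 - 2 * k) = 0 := by
    intro k
    induction k with
    | zero => simpa using hxr
    | succ k ih =>
      by_cases hc : 2 * (k + 1) ≤ mv
      · have h := hrow (mv - 1 - 2 * k) (by omega)
        rw [if_neg (by omega)] at h
        have e1 : mv + 1 - 2 * (k + 1) = mv - 1 - 2 * k := by omega
        have e2 : mv - 1 - 2 * k + 2 = mv + 1 - 2 * k := by omega
        rw [e2] at h
        rw [e1]
        linarith [ih, h]
      · exact aux_out _ _ _ (by omega)
  -- chain 3 : even positions below mv
  have C3 : ∀ k, 2 * k ≤ mv → aux d u (2 * k) = 0 := by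
    intro k
    induction k with
    | zero => intro _; exact aux_out _ _ _ (by omega)
    | succ k ih =>
      intro hk
      have h := hrow (2 * k) (by omega)
      rw [if_neg (by omega)] at h
      have e : 2 * (k + 1) = 2 * k + 2 := by ring
      rw [e]
      have h0 := ih (by omega)
      linarith [h0, h]
  -- chain 4 : even positions above mv
  have C4 : ∀ k, 2 * k ≤ d - mv → aux d u (d + 2 - 2 * k) = 0 := by
    intro k
    induction k with
    | zero => intro _; exact aux_out _ _ _ (by omega)
    | succ k ih =>
      intro hk
      have h := hrow (d - 2 * k) (by omega)
      rw [if_neg (by omega)] at h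
      have e1 : d + 2 - 2 * (k + 1) = d - 2 * k := by omega
      have e2 : d - 2 * k + 2 = d + 2 - 2 * k := by omega
      rw [e2] at h
      rw [e1]
      have h0 := ih (by omega)
      linarith [h0, h]
  have hall : ∀ t : ℕ, 1 ≤ t → t ≤ d + 1 → aux d u t = 0 := by
    intro t h1 h2
    rcases Nat.even_or_odd t with ⟨tc, htc⟩ | ⟨tc, htc⟩
    · by_cases hc : t ≤ mv
      · have h := C3 tc (by omega)
        rwa [show 2 * tc = t by omega] at h
      · have h := C4 (dc + 1 - tc) (by omega)
        rwa [show d + 2 - 2 * (dc + 1 - tc) = t by omega] at h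
    · by_cases hc : t ≤ mv + 1
      · have h := C2 (mc - tc)
        rwa [show mv + 1 - 2 * (mc - tc) = t by omega] at h
      · have h := C1 (tc - mc)
        rwa [show mv + 1 + 2 * (tc - mc) = t by omega] at h
  have hwz : u ⟨d + 1, by omega⟩ = 0 := by
    have h := hrow mv hmd
    rw [if_pos rfl] at h
    have h1 : aux d u mv = 0 := by
      rcases Nat.eq_zero_or_pos mv with h0 | h0
      · rw [h0]
        exact aux_out _ _ _ (by omega)
      · exact hall mv h0 (by omega)
    have h2 : aux d u (mv + 2) = 0 := by
      by_cases hc : mv + 2 ≤ d + 1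
      · exact hall (mv + 2) (by omega) hc
      · exact aux_out _ _ _ (by omega)
    rw [h1, h2] at h
    linarith [h]
  funext j
  obtain ⟨jv, hj⟩ := j
  show u ⟨jv, hj⟩ = 0
  by_cases hc : jv = d + 1
  · subst hc
    exact hwz
  · have h := hall (jv + 1) (by omega) (by omega)
    rw [aux, dif_pos ⟨by omega, by omega⟩] at h
    exact h

end Stmt13Aux

/-- Let `G` be connected with even diameter `d`, let
`p 0 ∼ p 1 ∼ ⋯ ∼ p d` be a diameter path (so `p i` is the vertex `v_{i+1}` in
1-indexed notation), and suppose `η(G) = n - d - 1`. If a vertex `x` not on the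
path has exactly one neighbour `p m` on the path (the vertex `v_{m+1}`), then its
1-indexed position `m + 1` is even. -/
theorem stmt13 {V : Type} [Fintype V] (G : SimpleGraph V)
    (hG : G.Connected) (heven : Even G.diam)
    (p : Fin (G.diam + 1) → V)
    (hadj : ∀ i : Fin G.diam, G.Adj (p i.castSucc) (p i.succ))
    (hdist : G.dist (p 0) (p (Fin.last G.diam)) = G.diam)
    (hnull : nullity G = Fintype.card V - G.diam - 1)
    (x : V) (hx : x ∉ Set.range p)
    (m : Fin (G.diam + 1)) (hm : G.Adj x (p m))
    (huniq : ∀ i : Fin (G.diam + 1), G.Adj x (p i) → i = m) :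
    Even ((m : ℕ) + 1) := by
  classical
  open Matrix in
  by_contra hodd
  have hmeven : Even (m : ℕ) := by
    rcases Nat.even_or_odd (m : ℕ) with h | h
    · exact h
    · exact absurd (Odd.add_one h) hodd
  -- `p` is a shortest path : distance upper bounds
  have SA : ∀ (k : ℕ) (a b : Fin (G.diam + 1)), (a : ℕ) + k = (b : ℕ) →
      G.dist (p a) (p b) ≤ k := by
    intro k
    induction k with
    | zero =>
      intro a b hab
      have hab' : a = b := Fin.ext (by omega)
      subst hab'
      simp [SimpleGraph.dist_self]
    | succ k ih =>
      intro a b hab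
      have hb := b.isLt
      have ha := a.isLt
      set c : Fin (G.diam + 1) := ⟨(a : ℕ) + k, by omega⟩ with hc
      have h1 := ih a c (by simp [hc])
      have hbeq : b = ⟨(a : ℕ) + k + 1, by omega⟩ := by
        apply Fin.ext
        show (b : ℕ) = (a : ℕ) + k + 1
        omega
      have hcadj : G.Adj (p c) (p b) := by
        rw [hbeq]
        exact hadj ⟨(a : ℕ) + k, by omega⟩
      have h2 : G.dist (p c) (p b) = 1 := SimpleGraph.dist_eq_one_iff_adj.mpr hcadj
      have h3 := hG.dist_triangle (u := p a) (v := p c) (w := p b)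
      omega
  -- exact distances along the path
  have DE : ∀ a b : Fin (G.diam + 1), (a : ℕ) ≤ (b : ℕ) →
      G.dist (p a) (p b) = (b : ℕ) - (a : ℕ) := by
    intro a b hab
    have ha := a.isLt
    have hb := b.isLt
    have b1 := SA (a : ℕ) 0 a (by simp)
    have b2 := SA ((b : ℕ) - (a : ℕ)) a b (by omega)
    have b3 := SA (G.diam - (b : ℕ)) b (Fin.last G.diam) (by simp [Fin.val_last]; omega)
    have t1 := hG.dist_triangle (u := p 0) (v := p a) (w := p (Fin.last G.diam))
    have t2 := hG.dist_triangle (u := p a) (v := p b) (w := p (Fin.last G.diam))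
    omega
  have hpadj : ∀ a b : Fin (G.diam + 1),
      G.Adj (p a) (p b) ↔ ((a : ℕ) + 1 = (b : ℕ) ∨ (b : ℕ) + 1 = (a : ℕ)) := by
    intro a b
    constructor
    · intro h
      rcases le_or_gt (a : ℕ) (b : ℕ) with hab | hab
      · have hD := DE a b hab
        have h1 := SimpleGraph.dist_eq_one_iff_adj.mpr h
        omega
      · have hD := DE b a (by omega)
        have h1 := SimpleGraph.dist_eq_one_iff_adj.mpr h.symm
        omega
    · intro h
      rcases h with h | h
      · have hD := DE a b (by omega)
        exact SimpleGraph.dist_eq_one_iff_adj.mp (by omega)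
      · have hD := DE b a (by omega)
        exact (SimpleGraph.dist_eq_one_iff_adj.mp (by omega)).symm
  have hpadjN : ∀ (a b : ℕ) (ha : a ≤ G.diam) (hb : b ≤ G.diam),
      G.Adj (p ⟨a, by omega⟩) (p ⟨b, by omega⟩) ↔ (a + 1 = b ∨ b + 1 = a) :=
    fun a b ha hb => hpadj ⟨a, by omega⟩ ⟨b, by omega⟩
  have hxadj : ∀ b : Fin (G.diam + 1), G.Adj x (p b) ↔ b = m :=
    fun b => ⟨huniq b, fun h => h ▸ hm⟩
  have hxadjN : ∀ (b : ℕ) (hb : b ≤ G.diam),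
      G.Adj x (p ⟨b, by omega⟩) ↔ b = (m : ℕ) := by
    intro b hb
    rw [hxadj ⟨b, by omega⟩, Fin.ext_iff]
  have hpinj : Function.Injective p := by
    intro a b hab
    rcases lt_trichotomy (a : ℕ) (b : ℕ) with h | h | h
    · exfalso
      have hD := DE a b (by omega)
      rw [hab, SimpleGraph.dist_self] at hD
      omega
    · exact Fin.ext h
    · exfalso
      have hD := DE b a (by omega)
      rw [hab, SimpleGraph.dist_self] at hD
      omega
  have hcard : G.diam + 1 ≤ Fintype.card V := by
    have h := Fintype.card_le_of_injective p hpinj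
    simpa using h
  -- the submatrix construction
  set f : Fin (G.diam + 2) → V := fun i =>
    if h : (i : ℕ) < G.diam + 1 then p ⟨(i : ℕ), h⟩ else x with hf
  have hf1 : ∀ (iv : ℕ) (h1 : iv < G.diam + 1) (h2 : iv < G.diam + 2),
      f ⟨iv, h2⟩ = p ⟨iv, h1⟩ := by
    intro iv h1 h2
    exact dif_pos h1
  have hf2 : ∀ (h2 : G.diam + 1 < G.diam + 2), f ⟨G.diam + 1, h2⟩ = x := by
    intro h2
    exact dif_neg (lt_irrefl _)
  set E : Matrix V (Fin (G.diam + 2)) ℝ := fun v j => if v = f j then (1 : ℝ) else 0 with hE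
  set B : Matrix (Fin (G.diam + 2)) (Fin (G.diam + 2)) ℝ := Eᵀ * (adjMat G * E) with hBdef
  have hBent : ∀ i j : Fin (G.diam + 2), B i j = adjMat G (f i) (f j) := by
    intro i j
    rw [hBdef, Matrix.mul_apply]
    have hstep : ∀ v : V, Eᵀ i v * (adjMat G * E) v j =
        if v = f i then (adjMat G * E) v j else 0 := by
      intro v
      rw [Matrix.transpose_apply, hE]
      show (if v = f i then (1 : ℝ) else 0) * _ = _
      split_ifs <;> ring
    rw [Finset.sum_congr rfl fun v _ => hstep v, Fintype.sum_ite_eq' (f i), Matrix.mul_apply]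
    have hstep2 : ∀ v : V, adjMat G (f i) v * E v j =
        if v = f j then adjMat G (f i) v else 0 := by
      intro v
      rw [hE]
      show _ * (if v = f j then (1 : ℝ) else 0) = _
      split_ifs <;> ring
    rw [Finset.sum_congr rfl fun v _ => hstep2 v, Fintype.sum_ite_eq' (f j)]
  have hmlt := m.isLt
  have hBcond : ∀ (iv jv : ℕ) (hiv : iv < G.diam + 2) (hjv : jv < G.diam + 2),
      B ⟨iv, hiv⟩ ⟨jv, hjv⟩ =
        if (iv ≤ G.diam ∧ jv ≤ G.diam ∧ (iv + 1 = jv ∨ jv + 1 = iv))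
            ∨ (iv = G.diam + 1 ∧ jv = (m : ℕ)) ∨ (jv = G.diam + 1 ∧ iv = (m : ℕ))
        then (1 : ℝ) else 0 := by
    intro iv jv hiv hjv
    rw [hBent]
    rcases Nat.lt_or_ge iv (G.diam + 1) with hi | hi <;>
      rcases Nat.lt_or_ge jv (G.diam + 1) with hj | hj
    · rw [hf1 iv hi hiv, hf1 jv hj hjv]
      show (if G.Adj (p ⟨iv, hi⟩) (p ⟨jv, hj⟩) then (1 : ℝ) else 0) = _
      by_cases hA : G.Adj (p ⟨iv, hi⟩) (p ⟨jv, hj⟩)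
      · rw [if_pos hA, if_pos]
        have h := (hpadjN iv jv (by omega) (by omega)).mp hA
        omega
      · rw [if_neg hA, if_neg]
        intro hC
        exact hA ((hpadjN iv jv (by omega) (by omega)).mpr (by omega))
    · have hjeq : jv = G.diam + 1 := by omega
      subst hjeq
      rw [hf1 iv hi hiv, hf2 hjv]
      show (if G.Adj (p ⟨iv, hi⟩) x then (1 : ℝ) else 0) = _
      by_cases hA : G.Adj (p ⟨iv, hi⟩) x
      · rw [if_pos hA, if_pos]
        have h := (hxadjN iv (by omega)).mp hA.symm
        omega
      · rw [if_neg hA, if_neg]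
        intro hC
        exact hA ((hxadjN iv (by omega)).mpr (by omega)).symm
    · have hieq : iv = G.diam + 1 := by omega
      subst hieq
      rw [hf2 hiv, hf1 jv hj hjv]
      show (if G.Adj x (p ⟨jv, hj⟩) then (1 : ℝ) else 0) = _
      by_cases hA : G.Adj x (p ⟨jv, hj⟩)
      · rw [if_pos hA, if_pos]
        have h := (hxadjN jv (by omega)).mp hA
        omega
      · rw [if_neg hA, if_neg]
        intro hC
        exact hA ((hxadjN jv (by omega)).mpr (by omega))
    · have hieq : iv = G.diam + 1 := by omega
      have hjeq : jv = G.diam + 1 := by omega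
      subst hieq
      subst hjeq
      rw [hf2 hiv]
      show (if G.Adj x x then (1 : ℝ) else 0) = _
      rw [if_neg (G.irrefl), if_neg (by omega)]
  have hker : LinearMap.ker B.mulVecLin = ⊥ :=
    Stmt13Aux.key G.diam (m : ℕ) heven hmeven (by omega) B hBcond
  have hrank2 : B.rank = G.diam + 2 := by
    have h := LinearMap.finrank_range_add_finrank_ker B.mulVecLin
    rw [hker, finrank_bot, Module.finrank_fintype_fun_eq_card, Fintype.card_fin] at h
    rw [Matrix.rank]
    omega
  have hrank1 : (adjMat G).rank + nullity G = Fintype.card V := by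
    have h := LinearMap.finrank_range_add_finrank_ker (adjMat G).mulVecLin
    rw [Module.finrank_fintype_fun_eq_card] at h
    exact h
  have hle : B.rank ≤ (adjMat G).rank := by
    rw [hBdef]
    calc (Eᵀ * (adjMat G * E)).rank ≤ (adjMat G * E).rank := Matrix.rank_mul_le_right _ _
      _ ≤ (adjMat G).rank := Matrix.rank_mul_le_left _ _
  omega
end

section
/- Let G be a connected finite simple graph on n vertices with even diameter d in which no two distinct vertices have equal neighborhoods, let P = v_1 ∼ v_2 ∼ ⋯ ∼ v_{d+1} be a diameter path of G, and suppose η(G) = n − d − 1. If x and y are distinct vertices not on P, each having exactly one neighbor on P, then x and y are not adjacent. -/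
open Finset in
private lemma sum_deltaQ {N K : ℕ} (hK : K < N) (Q : Prop) [Decidable Q] (W : ℕ → ℝ) :
    ∑ m ∈ Finset.range N, (if (m = K ∧ Q) then W m else 0) = if Q then W K else 0 := by
  by_cases hQ : Q
  · simp only [hQ, and_true, if_true]
    rw [Finset.sum_ite_eq' (Finset.range N) K W]
    simp [hK]
  · simp [hQ]

open Finset in
private lemma sum_delta1 {N K : ℕ} (hK : K < N) (W : ℕ → ℝ) :
    ∑ m ∈ Finset.range N, (if m = K then W m else 0) = W K := by
  rw [Finset.sum_ite_eq' (Finset.range N) K W]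
  simp [hK]

private lemma chainZero (d : ℕ) (a c : ℕ → ℝ)
    (h0 : ∀ i, d < i → a i = 0)
    (hE0 : a 1 + c 0 = 0)
    (hEs : ∀ i, i < d → a i + a (i+2) + c (i+1) = 0)
    (hc : ∀ i, c i = 0) (ha0 : a 0 = 0) : ∀ i, a i = 0 := by
  intro i
  induction i using Nat.strong_induction_on with
  | _ i ih =>
    match i with
    | 0 => exact ha0
    | 1 => have h := hE0; rw [hc 0] at h; linarith
    | (k+2) =>
      by_cases hk : k < d
      · have h := hEs k hk
        rw [hc (k+1)] at h
        have h2 := ih k (by omega)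
        linarith
      · exact h0 _ (by omega)

private lemma chainOdd (d : ℕ) (a c : ℕ → ℝ)
    (h0 : ∀ i, d < i → a i = 0)
    (hE0 : a 1 + c 0 = 0)
    (hEs : ∀ i, i < d → a i + a (i+2) + c (i+1) = 0)
    (hc : ∀ m, c (2*m) = 0) : ∀ k, a (2*k+1) = 0 := by
  intro k
  induction k with
  | zero =>
    have h2 := hc 0
    norm_num at h2
    rw [h2] at hE0
    simpa using hE0
  | succ k ih =>
    by_cases hk : 2*k+1 < d
    · have h := hEs (2*k+1) hk
      have h2 := hc (k+1)
      rw [show 2*(k+1) = 2*k+1+1 by omega] at h2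
      rw [h2] at h
      rw [show 2*(k+1)+1 = 2*k+1+2 by omega]
      linarith
    · exact h0 _ (by omega)

private lemma chainEven (d : ℕ) (a c : ℕ → ℝ)
    (hEs : ∀ i, i < d → a i + a (i+2) + c (i+1) = 0)
    (hc : ∀ m, c (2*m+1) = 0) : ∀ k, 2*k ≤ d → a (2*k) = (-1)^k * a 0 := by
  intro k
  induction k with
  | zero => intro _; simp
  | succ k ih =>
    intro hk
    have h := hEs (2*k) (by omega)
    rw [hc k] at h
    have h2 := ih (by omega)
    rw [show 2*(k+1) = 2*k+2 by omega, pow_succ]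
    linarith

private lemma bdry (d i0 : ℕ) (hd : d % 2 = 0) (hi0e : i0 % 2 = 0) (hi0 : i0 ≤ d)
    (a c : ℕ → ℝ)
    (h0 : ∀ i, d < i → a i = 0)
    (hE0 : a 1 + c 0 = 0)
    (hEs : ∀ i, i < d → a i + a (i+2) + c (i+1) = 0)
    (hc : ∀ i, i ≠ i0 → c i = 0) : c i0 = 0 := by
  have hbelow : ∀ k, 2*k+1 ≤ i0 → a (2*k+1) = 0 := by
    intro k
    induction k with
    | zero =>
      intro h1
      have hc0 := hc 0 (by omega)
      rw [hc0] at hE0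
      simpa using hE0
    | succ k ih =>
      intro h1
      have hk : 2*k+1 < d := by omega
      have h := hEs (2*k+1) hk
      have h2 := hc (2*k+2) (by omega)
      rw [h2] at h
      have h3 := ih (by omega)
      rw [show 2*(k+1)+1 = 2*k+1+2 by omega]
      linarith
  by_cases hid : i0 = d
  · by_cases hd0 : d = 0
    · have h1 : a 1 = 0 := h0 1 (by omega)
      rw [h1] at hE0
      rw [hid, hd0]
      linarith
    · obtain ⟨k, hk⟩ : ∃ k, d = 2*k+2 := ⟨(d-2)/2, by omega⟩
      have h := hEs (2*k+1) (by omega)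
      have h1 : a (2*k+1) = 0 := hbelow k (by omega)
      have h2 : a (2*k+1+2) = 0 := h0 _ (by omega)
      rw [h1, h2] at h
      rw [hid, hk, show 2*k+2 = 2*k+1+1 by omega]
      linarith
  · -- i0 < d
    have hstart : a (i0+1) = -(c i0) := by
      by_cases h00 : i0 = 0
      · subst h00; show a (0+1) = -c 0; norm_num; linarith
      · obtain ⟨k, hk⟩ : ∃ k, i0 = 2*k+2 := ⟨(i0-2)/2, by omega⟩
        have h := hEs (2*k+1) (by omega)
        have h1 : a (2*k+1) = 0 := hbelow k (by omega)
        rw [h1, show 2*k+1+1 = i0 by omega, show 2*k+1+2 = i0+1 by omega] at h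
        linarith
    have hchain : ∀ m, i0+1+2*m ≤ d → a (i0+1+2*m) = c i0 ∨ a (i0+1+2*m) = -(c i0) := by
      intro m
      induction m with
      | zero => intro _; right; simpa using hstart
      | succ m ih =>
        intro hm
        have hlt : i0+1+2*m < d := by omega
        have h := hEs (i0+1+2*m) hlt
        have h2 : c (i0+1+2*m+1) = 0 := hc _ (by omega)
        rw [h2] at h
        rcases ih (by omega) with h3 | h3 <;>
          [ (right; rw [show i0+1+2*(m+1) = i0+1+2*m+2 by omega]; linarith);
            (left; rw [show i0+1+2*(m+1) = i0+1+2*m+2 by omega]; linarith) ]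
    obtain ⟨m, hm⟩ : ∃ m, d = i0 + 2 + 2*m := ⟨(d - i0 - 2)/2, by omega⟩
    have h := hEs (i0+1+2*m) (by omega)
    have h1 : c (i0+1+2*m+1) = 0 := hc _ (by omega)
    have h2 : a (i0+1+2*m+2) = 0 := h0 _ (by omega)
    rw [h1, h2] at h
    rcases hchain m (by omega) with h3 | h3 <;> linarith

private lemma core1 (d i0 j0 : ℕ) (hd : d % 2 = 0) (hi0e : i0 % 2 = 0) (hi0 : i0 ≤ d)
    (a : ℕ → ℝ) (s t : ℝ)
    (h0 : ∀ i, d < i → a i = 0)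
    (heq : ∀ i, i ≤ d → (if 1 ≤ i then a (i-1) else 0) + a (i+1)
      + (if i = i0 then s else 0) + (if i = j0 then t else 0) = 0)
    (hF : a i0 + t = 0) (ht : t = 0) :
    s = 0 ∧ ∀ i, a i = 0 := by
  subst ht
  set c1 : ℕ → ℝ := fun i => if i = i0 then s else 0 with hc1
  have hE0 : a 1 + c1 0 = 0 := by
    have h := heq 0 (Nat.zero_le d)
    rw [if_neg (by omega : ¬ (1:ℕ) ≤ 0)] at h
    norm_num [ite_self] at h
    show a 1 + (if (0:ℕ) = i0 then s else 0) = 0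
    by_cases h0i : (0:ℕ) = i0
    · rw [if_pos h0i] at h ⊢; linarith
    · rw [if_neg h0i] at h ⊢; linarith
  have hEs : ∀ i, i < d → a i + a (i+2) + c1 (i+1) = 0 := by
    intro i hi
    have h := heq (i+1) (by omega)
    rw [if_pos (by omega : 1 ≤ i+1), Nat.add_sub_cancel] at h
    norm_num [ite_self] at h
    show a i + a (i+2) + (if i+1 = i0 then s else 0) = 0
    by_cases h0i : i+1 = i0
    · rw [if_pos h0i] at h ⊢; linarith
    · rw [if_neg h0i] at h ⊢; linarith
  have hs : s = 0 := by
    have hb := bdry d i0 hd hi0e hi0 a c1 h0 hE0 hEs (fun i hi => by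
      simp only [hc1]; rw [if_neg hi])
    simpa [hc1] using hb
  subst hs
  have hcz : ∀ i, c1 i = 0 := by intro i; simp [hc1]
  have hai0 : a i0 = 0 := by linarith
  obtain ⟨k, hk⟩ : ∃ k, i0 = 2*k := ⟨i0/2, by omega⟩
  have hce := chainEven d a c1 hEs (fun m => hcz _) k (by omega)
  rw [← hk, hai0] at hce
  have ha0 : a 0 = 0 := by
    rcases mul_eq_zero.mp hce.symm with h | h
    · exact absurd h (pow_ne_zero _ (by norm_num))
    · exact h
  exact ⟨rfl, chainZero d a c1 h0 hE0 hEs hcz ha0⟩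

private lemma core2 (d i0 j0 : ℕ) (hd : d % 2 = 0) (hj0e : j0 % 2 = 0) (hj0 : j0 ≤ d)
    (a : ℕ → ℝ) (s t : ℝ)
    (h0 : ∀ i, d < i → a i = 0)
    (heq : ∀ i, i ≤ d → (if 1 ≤ i then a (i-1) else 0) + a (i+1)
      + (if i = i0 then s else 0) + (if i = j0 then t else 0) = 0)
    (hG : a j0 + s = 0) (hs : s = 0) :
    t = 0 ∧ ∀ i, a i = 0 := by
  subst hs
  set c1 : ℕ → ℝ := fun i => if i = j0 then t else 0 with hc1
  have hE0 : a 1 + c1 0 = 0 := by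
    have h := heq 0 (Nat.zero_le d)
    rw [if_neg (by omega : ¬ (1:ℕ) ≤ 0)] at h
    norm_num [ite_self] at h
    show a 1 + (if (0:ℕ) = j0 then t else 0) = 0
    by_cases h0i : (0:ℕ) = j0
    · rw [if_pos h0i] at h ⊢; linarith
    · rw [if_neg h0i] at h ⊢; linarith
  have hEs : ∀ i, i < d → a i + a (i+2) + c1 (i+1) = 0 := by
    intro i hi
    have h := heq (i+1) (by omega)
    rw [if_pos (by omega : 1 ≤ i+1), Nat.add_sub_cancel] at h
    norm_num [ite_self] at h
    show a i + a (i+2) + (if i+1 = j0 then t else 0) = 0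
    by_cases h0i : i+1 = j0
    · rw [if_pos h0i] at h ⊢; linarith
    · rw [if_neg h0i] at h ⊢; linarith
  have ht : t = 0 := by
    have hb := bdry d j0 hd hj0e hj0 a c1 h0 hE0 hEs (fun i hi => by
      simp only [hc1]; rw [if_neg hi])
    simpa [hc1] using hb
  subst ht
  have hcz : ∀ i, c1 i = 0 := by intro i; simp [hc1]
  have haj0 : a j0 = 0 := by linarith
  obtain ⟨k, hk⟩ : ∃ k, j0 = 2*k := ⟨j0/2, by omega⟩
  have hce := chainEven d a c1 hEs (fun m => hcz _) k (by omega)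
  rw [← hk, haj0] at hce
  have ha0 : a 0 = 0 := by
    rcases mul_eq_zero.mp hce.symm with h | h
    · exact absurd h (pow_ne_zero _ (by norm_num))
    · exact h
  exact ⟨rfl, chainZero d a c1 h0 hE0 hEs hcz ha0⟩

private lemma core3 (d i0 j0 : ℕ) (hi0o : i0 % 2 = 1) (hj0o : j0 % 2 = 1)
    (a : ℕ → ℝ) (s t : ℝ)
    (h0 : ∀ i, d < i → a i = 0)
    (heq : ∀ i, i ≤ d → (if 1 ≤ i then a (i-1) else 0) + a (i+1)
      + (if i = i0 then s else 0) + (if i = j0 then t else 0) = 0)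
    (hF : a i0 + t = 0) (hG : a j0 + s = 0) (ha0 : a 0 = 0) :
    s = 0 ∧ t = 0 ∧ ∀ i, a i = 0 := by
  set c : ℕ → ℝ := fun i => (if i = i0 then s else 0) + (if i = j0 then t else 0) with hc
  have hE0 : a 1 + c 0 = 0 := by
    have h := heq 0 (Nat.zero_le d)
    rw [if_neg (by omega : ¬ (1:ℕ) ≤ 0)] at h
    norm_num [ite_self] at h
    show a 1 + ((if (0:ℕ) = i0 then s else 0) + (if (0:ℕ) = j0 then t else 0)) = 0
    linarith
  have hEs : ∀ i, i < d → a i + a (i+2) + c (i+1) = 0 := by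
    intro i hi
    have h := heq (i+1) (by omega)
    rw [if_pos (by omega : 1 ≤ i+1), Nat.add_sub_cancel] at h
    norm_num [ite_self] at h
    show a i + a (i+2) + ((if i+1 = i0 then s else 0) + (if i+1 = j0 then t else 0)) = 0
    linarith
  have hoddz : ∀ m, c (2*m) = 0 := by
    intro m
    show (if 2*m = i0 then s else 0) + (if 2*m = j0 then t else 0) = 0
    rw [if_neg (by omega), if_neg (by omega), add_zero]
  have hodds := chainOdd d a c h0 hE0 hEs hoddz
  obtain ⟨ki, hki⟩ : ∃ k, i0 = 2*k+1 := ⟨i0/2, by omega⟩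
  obtain ⟨kj, hkj⟩ : ∃ k, j0 = 2*k+1 := ⟨j0/2, by omega⟩
  have hai0 : a i0 = 0 := by rw [hki]; exact hodds ki
  have haj0 : a j0 = 0 := by rw [hkj]; exact hodds kj
  have ht : t = 0 := by linarith
  have hs : s = 0 := by linarith
  subst ht; subst hs
  have hcz : ∀ i, c i = 0 := by intro i; simp [hc]
  exact ⟨rfl, rfl, chainZero d a c h0 hE0 hEs hcz ha0⟩


private theorem stmt14aux {V : Type} [Fintype V] (G : SimpleGraph V)
    (hG : G.Connected) (d : ℕ) (hde : d % 2 = 0)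
    (p : Fin (d + 1) → V)
    (hadj : ∀ i : Fin d, G.Adj (p i.castSucc) (p i.succ))
    (hdist : G.dist (p 0) (p (Fin.last d)) = d)
    (hnull : nullity G = Fintype.card V - d - 1)
    (x y : V) (hxy : x ≠ y) (hx : x ∉ Set.range p) (hy : y ∉ Set.range p)
    (hx1 : ∃! i : Fin (d + 1), G.Adj x (p i))
    (hy1 : ∃! i : Fin (d + 1), G.Adj y (p i))
    (hadjxy : G.Adj x y) : False := by
  classical
  -- the path as an ℕ-indexed function
  set pp : ℕ → V := fun i => if h : i ≤ d then p ⟨i, by omega⟩ else p 0 with hpp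
  have hppd : ∀ i, (h : i ≤ d) → pp i = p ⟨i, by omega⟩ := by
    intro i h; simp only [hpp, dif_pos h]
  -- adjacency along the path
  have hAdjP : ∀ i, i < d → G.Adj (pp i) (pp (i+1)) := by
    intro i hi
    have h1 : pp i = p (Fin.castSucc ⟨i, hi⟩) := by
      rw [hppd i (by omega)]; congr 1
    have h2 : pp (i+1) = p (Fin.succ ⟨i, hi⟩) := by
      rw [hppd (i+1) (by omega)]; congr 1
    rw [h1, h2]; exact hadj ⟨i, hi⟩
  -- distance upper bound along the path
  have hdistle : ∀ k i, i + k ≤ d → G.dist (pp i) (pp (i+k)) ≤ k := by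
    intro k
    induction k with
    | zero => intro i _; simp
    | succ k ih =>
      intro i h
      show G.dist (pp i) (pp (i+k+1)) ≤ k+1
      have h1 := ih i (by omega)
      have h2 : G.dist (pp (i+k)) (pp (i+k+1)) = 1 :=
        SimpleGraph.dist_eq_one_iff_adj.mpr (hAdjP (i+k) (by omega))
      have h3 := hG.dist_triangle (u := pp i) (v := pp (i+k)) (w := pp (i+k+1))
      omega
  -- exact distances
  have hdisteq : ∀ i j, i ≤ j → j ≤ d → G.dist (pp i) (pp j) = j - i := by
    intro i j hij hj
    have h1 : G.dist (pp i) (pp j) ≤ j - i := by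
      have := hdistle (j-i) i (by omega)
      rwa [show i + (j-i) = j by omega] at this
    have h0i : G.dist (pp 0) (pp i) ≤ i := by
      have := hdistle i 0 (by omega); simpa using this
    have hjd : G.dist (pp j) (pp d) ≤ d - j := by
      have := hdistle (d-j) j (by omega)
      rwa [show j + (d-j) = d by omega] at this
    have hfull : G.dist (pp 0) (pp d) = d := by
      have e0 : pp 0 = p 0 := by rw [hppd 0 (by omega)]; congr 1
      have ed : pp d = p (Fin.last d) := by rw [hppd d le_rfl]; congr 1
      rw [e0, ed]; exact hdist
    have t1 := hG.dist_triangle (u := pp 0) (v := pp i) (w := pp d)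
    have t2 := hG.dist_triangle (u := pp i) (v := pp j) (w := pp d)
    omega
  -- distinct path vertices
  have hppne : ∀ i j, i ≤ d → j ≤ d → i ≠ j → pp i ≠ pp j := by
    intro i j hi hj hne heq2
    rcases Nat.lt_or_ge i j with h | h
    · have := hdisteq i j (by omega) hj
      rw [heq2, SimpleGraph.dist_self] at this; omega
    · have hlt : j < i := by omega
      have := hdisteq j i (by omega) hi
      rw [← heq2, SimpleGraph.dist_self] at this; omega
  -- adjacency on the path is exactly consecutive
  have hPadjIff : ∀ i k, i ≤ d → k ≤ d → (G.Adj (pp i) (pp k) ↔ (k+1 = i ∨ i+1 = k)) := by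
    intro i k hi hk
    constructor
    · intro hA
      by_contra hcon
      push_neg at hcon
      have hne : i ≠ k := by rintro rfl; exact G.irrefl hA
      have hd1 : G.dist (pp i) (pp k) = 1 := SimpleGraph.dist_eq_one_iff_adj.mpr hA
      rcases Nat.lt_or_ge i k with h | h
      · have := hdisteq i k (by omega) hk; omega
      · have := hdisteq k i (by omega) hi
        rw [SimpleGraph.dist_comm] at this; omega
    · rintro (h | h)
      · have := hAdjP k (by omega)
        rw [h] at this; exact this.symm
      · have := hAdjP i (by omega)
        rw [h] at this; exact this
  -- unique neighbours on the path
  obtain ⟨i0f, hi0adj, hi0uniq⟩ := hx1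
  obtain ⟨j0f, hj0adj, hj0uniq⟩ := hy1
  set i0 : ℕ := (i0f : ℕ) with hi0def
  set j0 : ℕ := (j0f : ℕ) with hj0def
  have hi0d : i0 ≤ d := by have := i0f.isLt; omega
  have hj0d : j0 ≤ d := by have := j0f.isLt; omega
  have hXadj : ∀ i, i ≤ d → (G.Adj (pp i) x ↔ i = i0) := by
    intro i hi
    rw [hppd i hi]
    constructor
    · intro h
      have := hi0uniq ⟨i, by omega⟩ h.symm
      exact congrArg Fin.val this
    · intro h
      have he : (⟨i, by omega⟩ : Fin (d+1)) = i0f := Fin.ext h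
      rw [he]; exact hi0adj.symm
  have hYadj : ∀ i, i ≤ d → (G.Adj (pp i) y ↔ i = j0) := by
    intro i hi
    rw [hppd i hi]
    constructor
    · intro h
      have := hj0uniq ⟨i, by omega⟩ h.symm
      exact congrArg Fin.val this
    · intro h
      have he : (⟨i, by omega⟩ : Fin (d+1)) = j0f := Fin.ext h
      rw [he]; exact hj0adj.symm
  have hppx : ∀ i, i ≤ d → pp i ≠ x := by
    intro i hi h
    exact hx ⟨⟨i, by omega⟩, by rw [← hppd i hi, h]⟩
  have hppy : ∀ i, i ≤ d → pp i ≠ y := by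
    intro i hi h
    exact hy ⟨⟨i, by omega⟩, by rw [← hppd i hi, h]⟩
  -- enumeration of the d+3 special vertices
  set vv : Fin (d+3) → V := fun k =>
    if (k : ℕ) ≤ d then pp k else (if (k : ℕ) = d+1 then x else y) with hvv
  have hvvp : ∀ k : Fin (d+3), (k : ℕ) ≤ d → vv k = pp k := by
    intro k hk; simp only [hvv, if_pos hk]
  have hvvx : ∀ k : Fin (d+3), (k : ℕ) = d+1 → vv k = x := by
    intro k hk; simp only [hvv]; rw [if_neg (by omega), if_pos hk]
  have hvvy : ∀ k : Fin (d+3), (k : ℕ) = d+2 → vv k = y := by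
    intro k hk; simp only [hvv]; rw [if_neg (by omega), if_neg (by omega)]
  have hvvinj : Function.Injective vv := by
    intro k l hkl
    have hk3 := k.isLt
    have hl3 := l.isLt
    apply Fin.ext
    by_cases hk : (k:ℕ) ≤ d <;> by_cases hl : (l:ℕ) ≤ d
    · by_contra hne
      exact hppne k l hk hl (by omega) (by rw [← hvvp k hk, ← hvvp l hl, hkl])
    · exfalso
      rcases (by omega : (l:ℕ) = d+1 ∨ (l:ℕ) = d+2) with h | h
      · exact hppx k hk (by rw [← hvvp k hk, ← hvvx l h, hkl])
      · exact hppy k hk (by rw [← hvvp k hk, ← hvvy l h, hkl])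
    · exfalso
      rcases (by omega : (k:ℕ) = d+1 ∨ (k:ℕ) = d+2) with h | h
      · exact hppx l hl (by rw [← hvvp l hl, ← hvvx k h, ← hkl])
      · exact hppy l hl (by rw [← hvvp l hl, ← hvvy k h, ← hkl])
    · rcases (by omega : (k:ℕ) = d+1 ∨ (k:ℕ) = d+2) with h | h <;>
        rcases (by omega : (l:ℕ) = d+1 ∨ (l:ℕ) = d+2) with h' | h'
      · omega
      · exfalso; exact hxy (by rw [← hvvx k h, ← hvvy l h', hkl])
      · exfalso; exact hxy (by rw [← hvvx l h', ← hvvy k h, hkl])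
      · omega
  -- the local matrix B
  set B : Matrix V (Fin (d+3)) ℝ :=
    Matrix.of (fun u k => if G.Adj u (vv k) then (1:ℝ) else 0) with hBdef
  -- range of B.mulVecLin is inside range of (adjMat G).mulVecLin
  have hrangeB : LinearMap.range B.mulVecLin ≤ LinearMap.range (adjMat G).mulVecLin := by
    rintro z ⟨w, rfl⟩
    refine ⟨fun u => ∑ k : Fin (d+3), if vv k = u then w k else 0, ?_⟩
    funext u
    simp only [Matrix.mulVecLin_apply, Matrix.mulVec, dotProduct]
    have step1 : ∀ u' : V, adjMat G u u' * (∑ k : Fin (d+3), if vv k = u' then w k else 0)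
        = ∑ k : Fin (d+3), (if vv k = u' then adjMat G u u' * w k else 0) := by
      intro u'
      rw [Finset.mul_sum]
      refine Finset.sum_congr rfl fun k _ => ?_
      split <;> simp
    rw [Finset.sum_congr rfl (fun u' _ => step1 u'), Finset.sum_comm]
    refine Finset.sum_congr rfl fun k _ => ?_
    have step2 : ∀ u' : V, (if vv k = u' then adjMat G u u' * w k else 0)
        = (if vv k = u' then adjMat G u (vv k) * w k else 0) := by
      intro u'
      by_cases h : vv k = u'
      · rw [if_pos h, if_pos h, h]
      · rw [if_neg h, if_neg h]
    rw [Finset.sum_congr rfl (fun u' _ => step2 u'), Finset.sum_ite_eq Finset.univ (vv k)]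
    simp only [Finset.mem_univ, if_true]
    show adjMat G u (vv k) * w k = B u k * w k
    simp only [hBdef, adjMat, Matrix.of_apply]
  -- rank bounds
  have hrn := LinearMap.finrank_range_add_finrank_ker (adjMat G).mulVecLin
  rw [Module.finrank_pi ℝ] at hrn
  have hcard : d + 3 ≤ Fintype.card V := by
    have := Fintype.card_le_of_injective vv hvvinj
    simpa using this
  have hkerA : Module.finrank ℝ (LinearMap.ker (adjMat G).mulVecLin)
      = Fintype.card V - d - 1 := hnull
  have hrangeA : Module.finrank ℝ (LinearMap.range (adjMat G).mulVecLin) = d + 1 := by omega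
  have hrkB : Module.finrank ℝ (LinearMap.range B.mulVecLin) ≤ d + 1 := by
    rw [← hrangeA]; exact Submodule.finrank_mono hrangeB
  have hrnB := LinearMap.finrank_range_add_finrank_ker B.mulVecLin
  rw [Module.finrank_pi ℝ, Fintype.card_fin] at hrnB
  have hkerB2 : 2 ≤ Module.finrank ℝ (LinearMap.ker B.mulVecLin) := by omega
  -- kernel equations
  have hker0 : ∀ w : Fin (d+3) → ℝ, B.mulVec w = 0 → ∀ u : V,
      (∑ k : Fin (d+3), if G.Adj u (vv k) then w k else 0) = 0 := by
    intro w hw u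
    have h := congrFun hw u
    simp only [Matrix.mulVec, dotProduct, Pi.zero_apply] at h
    refine Eq.trans (Finset.sum_congr rfl fun k _ => ?_) h
    show (if G.Adj u (vv k) then w k else 0) = B u k * w k
    simp only [hBdef, Matrix.of_apply]
    split <;> simp
  set WW : (Fin (d+3) → ℝ) → ℕ → ℝ := fun w m => if h : m < d+3 then w ⟨m, h⟩ else 0 with hWW
  set aa : (Fin (d+3) → ℝ) → ℕ → ℝ := fun w m => if m ≤ d then WW w m else 0 with haa
  have hWk : ∀ (w : Fin (d+3) → ℝ) (k : Fin (d+3)), WW w (k:ℕ) = w k := by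
    intro w k
    simp only [hWW]
    rw [dif_pos k.isLt, Fin.eta]
  -- the path-row equations
  have rowP : ∀ w : Fin (d+3) → ℝ, B.mulVec w = 0 → ∀ i, i ≤ d →
      (if 1 ≤ i then aa w (i-1) else 0) + aa w (i+1)
        + (if i = i0 then WW w (d+1) else 0) + (if i = j0 then WW w (d+2) else 0) = 0 := by
    intro w hw i hi
    have hsum := hker0 w hw (pp i)
    set DD : ℕ → ℝ := fun m =>
      (if (m = i-1 ∧ 1 ≤ i) then WW w m else 0) + (if (m = i+1 ∧ i < d) then WW w m else 0)
      + (if (m = d+1 ∧ i = i0) then WW w m else 0) + (if (m = d+2 ∧ i = j0) then WW w m else 0)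
      with hDD
    have hpoint : ∀ k : Fin (d+3), (if G.Adj (pp i) (vv k) then w k else 0) = DD (k:ℕ) := by
      intro k
      have hk3 : (k:ℕ) < d+3 := k.isLt
      simp only [hDD]
      by_cases hk : (k:ℕ) ≤ d
      · rw [hvvp k hk]
        by_cases hA1 : (k:ℕ)+1 = i
        · rw [if_pos ((hPadjIff i k hi hk).mpr (Or.inl hA1)),
            if_pos (by omega : (k:ℕ) = i-1 ∧ 1 ≤ i),
            if_neg (by omega : ¬((k:ℕ) = i+1 ∧ i < d)),
            if_neg (by omega : ¬((k:ℕ) = d+1 ∧ i = i0)),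
            if_neg (by omega : ¬((k:ℕ) = d+2 ∧ i = j0)), hWk]
          ring
        · by_cases hA2 : i+1 = (k:ℕ)
          · rw [if_pos ((hPadjIff i k hi hk).mpr (Or.inr hA2)),
              if_neg (by omega : ¬((k:ℕ) = i-1 ∧ 1 ≤ i)),
              if_pos (by omega : (k:ℕ) = i+1 ∧ i < d),
              if_neg (by omega : ¬((k:ℕ) = d+1 ∧ i = i0)),
              if_neg (by omega : ¬((k:ℕ) = d+2 ∧ i = j0)), hWk]
            ring
          · rw [if_neg (fun hA => by rcases (hPadjIff i k hi hk).mp hA with h | h <;> omega),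
              if_neg (by omega : ¬((k:ℕ) = i-1 ∧ 1 ≤ i)),
              if_neg (by omega : ¬((k:ℕ) = i+1 ∧ i < d)),
              if_neg (by omega : ¬((k:ℕ) = d+1 ∧ i = i0)),
              if_neg (by omega : ¬((k:ℕ) = d+2 ∧ i = j0))]
            ring
      · rcases (by omega : (k:ℕ) = d+1 ∨ (k:ℕ) = d+2) with hcase | hcase
        · rw [hvvx k hcase]
          by_cases hii : i = i0
          · rw [if_pos ((hXadj i hi).mpr hii),
              if_neg (by omega : ¬((k:ℕ) = i-1 ∧ 1 ≤ i)),
              if_neg (by omega : ¬((k:ℕ) = i+1 ∧ i < d)),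
              if_pos (⟨hcase, hii⟩ : (k:ℕ) = d+1 ∧ i = i0),
              if_neg (by omega : ¬((k:ℕ) = d+2 ∧ i = j0)), hWk]
            ring
          · rw [if_neg (fun hA => hii ((hXadj i hi).mp hA)),
              if_neg (by omega : ¬((k:ℕ) = i-1 ∧ 1 ≤ i)),
              if_neg (by omega : ¬((k:ℕ) = i+1 ∧ i < d)),
              if_neg (by omega : ¬((k:ℕ) = d+1 ∧ i = i0)),
              if_neg (by omega : ¬((k:ℕ) = d+2 ∧ i = j0))]
            ring
        · rw [hvvy k hcase]
          by_cases hii : i = j0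
          · rw [if_pos ((hYadj i hi).mpr hii),
              if_neg (by omega : ¬((k:ℕ) = i-1 ∧ 1 ≤ i)),
              if_neg (by omega : ¬((k:ℕ) = i+1 ∧ i < d)),
              if_neg (by omega : ¬((k:ℕ) = d+1 ∧ i = i0)),
              if_pos (⟨hcase, hii⟩ : (k:ℕ) = d+2 ∧ i = j0), hWk]
            ring
          · rw [if_neg (fun hA => hii ((hYadj i hi).mp hA)),
              if_neg (by omega : ¬((k:ℕ) = i-1 ∧ 1 ≤ i)),
              if_neg (by omega : ¬((k:ℕ) = i+1 ∧ i < d)),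
              if_neg (by omega : ¬((k:ℕ) = d+1 ∧ i = i0)),
              if_neg (by omega : ¬((k:ℕ) = d+2 ∧ i = j0))]
            ring
    rw [Finset.sum_congr rfl (fun k _ => hpoint k), Fin.sum_univ_eq_sum_range DD (d+3)] at hsum
    simp only [hDD] at hsum
    rw [Finset.sum_add_distrib, Finset.sum_add_distrib, Finset.sum_add_distrib,
      sum_deltaQ (show i-1 < d+3 by omega) (1 ≤ i) (WW w),
      sum_deltaQ (show i+1 < d+3 by omega) (i < d) (WW w),
      sum_deltaQ (show d+1 < d+3 by omega) (i = i0) (WW w),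
      sum_deltaQ (show d+2 < d+3 by omega) (i = j0) (WW w)] at hsum
    have e1 : (if 1 ≤ i then WW w (i-1) else 0) = (if 1 ≤ i then aa w (i-1) else 0) := by
      by_cases h : 1 ≤ i
      · rw [if_pos h, if_pos h]; simp only [haa]; rw [if_pos (by omega : i-1 ≤ d)]
      · rw [if_neg h, if_neg h]
    have e2 : (if i < d then WW w (i+1) else 0) = aa w (i+1) := by
      by_cases h : i < d
      · rw [if_pos h]; simp only [haa]; rw [if_pos (by omega : i+1 ≤ d)]
      · rw [if_neg h]; simp only [haa]; rw [if_neg (by omega : ¬ i+1 ≤ d)]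
    rw [e1, e2] at hsum
    exact hsum
  -- the x-row equation
  have rowX : ∀ w : Fin (d+3) → ℝ, B.mulVec w = 0 → aa w i0 + WW w (d+2) = 0 := by
    intro w hw
    have hsum := hker0 w hw x
    set DD : ℕ → ℝ := fun m =>
      (if m = i0 then WW w m else 0) + (if m = d+2 then WW w m else 0) with hDD
    have hpoint : ∀ k : Fin (d+3), (if G.Adj x (vv k) then w k else 0) = DD (k:ℕ) := by
      intro k
      simp only [hDD]
      by_cases hk : (k:ℕ) ≤ d
      · rw [hvvp k hk]
        by_cases hki : (k:ℕ) = i0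
        · rw [if_pos ((hXadj k hk).mpr hki).symm, if_pos hki,
            if_neg (by omega : ¬((k:ℕ) = d+2)), hWk]
          ring
        · rw [if_neg (fun hA => hki ((hXadj k hk).mp hA.symm)), if_neg hki,
            if_neg (by omega : ¬((k:ℕ) = d+2))]
          ring
      · rcases (by omega : (k:ℕ) = d+1 ∨ (k:ℕ) = d+2) with hcase | hcase
        · rw [hvvx k hcase, if_neg (G.irrefl : ¬ G.Adj x x),
            if_neg (by omega : ¬((k:ℕ) = i0)), if_neg (by omega : ¬((k:ℕ) = d+2))]
          ring
        · rw [hvvy k hcase, if_pos hadjxy, if_neg (by omega : ¬((k:ℕ) = i0)),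
            if_pos hcase, hWk]
          ring
    rw [Finset.sum_congr rfl (fun k _ => hpoint k), Fin.sum_univ_eq_sum_range DD (d+3)] at hsum
    simp only [hDD] at hsum
    rw [Finset.sum_add_distrib,
      sum_delta1 (show i0 < d+3 by omega) (WW w),
      sum_delta1 (show d+2 < d+3 by omega) (WW w)] at hsum
    have e1 : aa w i0 = WW w i0 := by simp only [haa]; rw [if_pos hi0d]
    rw [e1]
    exact hsum
  -- the y-row equation
  have rowY : ∀ w : Fin (d+3) → ℝ, B.mulVec w = 0 → aa w j0 + WW w (d+1) = 0 := by
    intro w hw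
    have hsum := hker0 w hw y
    set DD : ℕ → ℝ := fun m =>
      (if m = j0 then WW w m else 0) + (if m = d+1 then WW w m else 0) with hDD
    have hpoint : ∀ k : Fin (d+3), (if G.Adj y (vv k) then w k else 0) = DD (k:ℕ) := by
      intro k
      simp only [hDD]
      by_cases hk : (k:ℕ) ≤ d
      · rw [hvvp k hk]
        by_cases hki : (k:ℕ) = j0
        · rw [if_pos ((hYadj k hk).mpr hki).symm, if_pos hki,
            if_neg (by omega : ¬((k:ℕ) = d+1)), hWk]
          ring
        · rw [if_neg (fun hA => hki ((hYadj k hk).mp hA.symm)), if_neg hki,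
            if_neg (by omega : ¬((k:ℕ) = d+1))]
          ring
      · rcases (by omega : (k:ℕ) = d+1 ∨ (k:ℕ) = d+2) with hcase | hcase
        · rw [hvvx k hcase, if_pos hadjxy.symm, if_neg (by omega : ¬((k:ℕ) = j0)),
            if_pos hcase, hWk]
          ring
        · rw [hvvy k hcase, if_neg (G.irrefl : ¬ G.Adj y y),
            if_neg (by omega : ¬((k:ℕ) = j0)), if_neg (by omega : ¬((k:ℕ) = d+1))]
          ring
    rw [Finset.sum_congr rfl (fun k _ => hpoint k), Fin.sum_univ_eq_sum_range DD (d+3)] at hsum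
    simp only [hDD] at hsum
    rw [Finset.sum_add_distrib,
      sum_delta1 (show j0 < d+3 by omega) (WW w),
      sum_delta1 (show d+1 < d+3 by omega) (WW w)] at hsum
    have e1 : aa w j0 = WW w j0 := by simp only [haa]; rw [if_pos hj0d]
    rw [e1]
    exact hsum
  -- vanishing of a chosen coordinate kills any kernel vector
  have h0w : ∀ w : Fin (d+3) → ℝ, ∀ m, d < m → aa w m = 0 := by
    intro w m hm; simp only [haa]; rw [if_neg (by omega)]
  have wext : ∀ w : Fin (d+3) → ℝ, (∀ i, aa w i = 0) → WW w (d+1) = 0 → WW w (d+2) = 0 → w = 0 := by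
    intro w hall h1 h2
    funext k
    have hk3 := k.isLt
    show w k = 0
    by_cases hk : (k:ℕ) ≤ d
    · have h := hall (k:ℕ)
      simp only [haa] at h
      rw [if_pos hk, hWk] at h
      exact h
    · rcases (by omega : (k:ℕ) = d+1 ∨ (k:ℕ) = d+2) with h | h
      · rw [← hWk w k, h]; exact h1
      · rw [← hWk w k, h]; exact h2
  have hzero : ∃ k₀ : Fin (d+3), ∀ w : Fin (d+3) → ℝ, B.mulVec w = 0 → w k₀ = 0 → w = 0 := by
    rcases Nat.even_or_odd i0 with hi0e | hi0o
    · refine ⟨⟨d+2, by omega⟩, fun w hw hk0 => ?_⟩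
      have ht : WW w (d+2) = 0 := by
        rw [show (d+2 : ℕ) = ((⟨d+2, by omega⟩ : Fin (d+3)) : ℕ) from rfl, hWk]
        exact hk0
      obtain ⟨hs, hall⟩ := core1 d i0 j0 hde (Nat.even_iff.mp hi0e) hi0d (aa w)
        (WW w (d+1)) (WW w (d+2)) (h0w w) (rowP w hw) (rowX w hw) ht
      exact wext w hall hs ht
    · rcases Nat.even_or_odd j0 with hj0e | hj0o
      · refine ⟨⟨d+1, by omega⟩, fun w hw hk0 => ?_⟩
        have hs : WW w (d+1) = 0 := by
          rw [show (d+1 : ℕ) = ((⟨d+1, by omega⟩ : Fin (d+3)) : ℕ) from rfl, hWk]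
          exact hk0
        obtain ⟨ht, hall⟩ := core2 d i0 j0 hde (Nat.even_iff.mp hj0e) hj0d (aa w)
          (WW w (d+1)) (WW w (d+2)) (h0w w) (rowP w hw) (rowY w hw) hs
        exact wext w hall hs ht
      · refine ⟨⟨0, by omega⟩, fun w hw hk0 => ?_⟩
        have ha0 : aa w 0 = 0 := by
          simp only [haa]
          rw [if_pos (by omega : (0:ℕ) ≤ d)]
          rw [show (0 : ℕ) = ((⟨0, by omega⟩ : Fin (d+3)) : ℕ) from rfl, hWk]
          exact hk0
        obtain ⟨hs, ht, hall⟩ := core3 d i0 j0 (Nat.odd_iff.mp hi0o) (Nat.odd_iff.mp hj0o)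
          (aa w) (WW w (d+1)) (WW w (d+2)) (h0w w) (rowP w hw) (rowX w hw) (rowY w hw) ha0
        exact wext w hall hs ht
  obtain ⟨k₀, hk₀⟩ := hzero
  have hinj : Function.Injective ((LinearMap.proj k₀ : (Fin (d+3) → ℝ) →ₗ[ℝ] ℝ).comp
      (LinearMap.ker B.mulVecLin).subtype) := by
    rw [← LinearMap.ker_eq_bot, Submodule.eq_bot_iff]
    intro z hz
    have hzker : B.mulVecLin (z : Fin (d+3) → ℝ) = 0 := z.2
    rw [Matrix.mulVecLin_apply] at hzker
    have hz0 : (z : Fin (d+3) → ℝ) k₀ = 0 := hz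
    exact Subtype.ext (hk₀ (z : Fin (d+3) → ℝ) hzker hz0)
  have hle1 : Module.finrank ℝ (LinearMap.ker B.mulVecLin) ≤ 1 := by
    have hf := LinearMap.finrank_le_finrank_of_injective hinj
    simpa using hf
  omega

/-- Let `G` be connected, twin-free (no two distinct vertices have equal
neighbourhoods), with even diameter `d`, let `p 0 ∼ ⋯ ∼ p d` be a diameter path,
and suppose `η(G) = n - d - 1`. If `x ≠ y` are vertices not on the path, each
having exactly one neighbour on the path, then `x` and `y` are not adjacent. -/
theorem stmt14 {V : Type} [Fintype V] (G : SimpleGraph V)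
    (hG : G.Connected) (heven : Even G.diam)
    (hreduced : ∀ a b : V, G.neighborSet a = G.neighborSet b → a = b)
    (p : Fin (G.diam + 1) → V)
    (hadj : ∀ i : Fin G.diam, G.Adj (p i.castSucc) (p i.succ))
    (hdist : G.dist (p 0) (p (Fin.last G.diam)) = G.diam)
    (hnull : nullity G = Fintype.card V - G.diam - 1)
    (x y : V) (hxy : x ≠ y) (hx : x ∉ Set.range p) (hy : y ∉ Set.range p)
    (hx1 : ∃! i : Fin (G.diam + 1), G.Adj x (p i))
    (hy1 : ∃! i : Fin (G.diam + 1), G.Adj y (p i)) :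
    ¬ G.Adj x y := by
  intro hadjxy
  exact stmt14aux G hG G.diam (Nat.even_iff.mp heven) p hadj hdist hnull
    x y hxy hx hy hx1 hy1 hadjxy
end

section
/- Let G be a connected finite simple graph on n vertices with even diameter d in which no two distinct vertices have equal neighborhoods, let P = v_1 ∼ v_2 ∼ ⋯ ∼ v_{d+1} be a diameter path of G, and suppose η(G) = n − d − 1. Then there is exactly one vertex of G outside P having exactly three neighbors on P. -/
/-!
Order the vertices as the path `P` followed by the rest `Q`, so that
`A(G) = [[A_P, B], [Bᵀ, C]]`, where `A_P` is the adjacency matrix of a path on `d + 1` vertices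
(a diameter path is induced). For even `d`, `A_P` has rank `d` and its kernel is spanned by
`u = (1, 0, -1, 0, 1, …)`. If a column of `B` were not orthogonal to `u`, a principal submatrix of
size `d + 2` would be nonsingular, contradicting `η(G) = n - d - 1`. Hence `B = A_P X`, and
congruence by a unipotent block matrix gives `rank A(G) = d + rank S` for the Schur complement
`S = C - Xᵀ A_P X`, so `rank S = 1`.

A vertex of `Q` sees at most three consecutive vertices of `P`, and a direct computation gives
`S_zz = 0` unless it sees exactly three, in which case `S_zz = -2`. A nonzero symmetric matrix of
rank one has a nonzero diagonal entry, which gives existence; for two such vertices the vanishing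
`2 × 2` minors of `S` force equal neighbourhoods on `P` and equal columns of `S`, i.e. twins.
-/

open Finset Matrix SimpleGraph

section LinearAlgebra

variable {K : Type*} [Field K]

theorem Matrix.rank_fromBlocks_zero_zero {m n m' n' : Type*} [Fintype m] [Fintype n]
    [Fintype m'] [Fintype n'] (A : Matrix m m' K) (D : Matrix n n' K) :
    (fromBlocks A 0 0 D).rank = A.rank + D.rank := by
  have hM : (fromBlocks A 0 0 D).mulVecLin =
      (LinearEquiv.sumArrowLequivProdArrow m n K K).symm.toLinearMap ∘ₗ
        (A.mulVecLin.prodMap D.mulVecLin) ∘ₗ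
          (LinearEquiv.sumArrowLequivProdArrow m' n' K K).toLinearMap := by
    ext x i
    rcases i with i | i <;> simp [fromBlocks_mulVec] <;> rfl
  have hprod (p : Submodule K (m → K)) (q : Submodule K (n → K)) :
      Module.finrank K (p.prod q) = Module.finrank K p + Module.finrank K q := by
    have hinj : Function.Injective (p.subtype.prodMap q.subtype) :=
      Prod.map_injective.mpr ⟨p.injective_subtype, q.injective_subtype⟩
    rw [← Module.finrank_prod, ← LinearMap.finrank_range_of_inj hinj, LinearMap.range_prodMap,
      Submodule.range_subtype, Submodule.range_subtype]
  rw [rank, hM, LinearMap.range_comp, LinearMap.range_comp_of_range_eq_top _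
    (LinearEquiv.range _), LinearEquiv.finrank_map_eq, LinearMap.range_prodMap, hprod]
  rfl

theorem Matrix.rank_fromBlocks_mul {ι κ : Type*} [Fintype ι] [Fintype κ] [DecidableEq ι]
    [DecidableEq κ] (A : Matrix ι ι K) (X : Matrix ι κ K) (C : Matrix κ κ K) :
    (fromBlocks A (A * X) (Xᵀ * A) C).rank = A.rank + (C - Xᵀ * A * X).rank := by
  have hdiag : fromBlocks 1 0 (-Xᵀ) 1 * fromBlocks A (A * X) (Xᵀ * A) C * fromBlocks 1 (-X) 0 1
      = fromBlocks A 0 0 (C - Xᵀ * A * X) := by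
    simp [fromBlocks_multiply, Matrix.mul_assoc]
    abel
  rw [← rank_fromBlocks_zero_zero, ← hdiag, rank_mul_eq_left_of_isUnit_det,
    rank_mul_eq_right_of_isUnit_det] <;> simp

theorem Matrix.mul_eq_mul_of_rank_le_one {m n : Type*} [Fintype n] {S : Matrix m n K}
    (hS : S.rank ≤ 1) (i j : m) (k l : n) : S i k * S j l = S i l * S j k := by
  by_contra hne
  have hdet : IsUnit (S.submatrix ![i, j] ![k, l]).det := by
    rw [isUnit_iff_ne_zero, det_fin_two]
    simpa [sub_eq_zero] using hne
  have h2 := rank_of_isUnit _ ((isUnit_iff_isUnit_det _).mpr hdet)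
  have := rank_submatrix_le S ![i, j] ![k, l]
  simp only [Fintype.card_fin] at h2
  omega

theorem Matrix.card_add_one_le_rank_fromBlocks {ι κ : Type*} [Fintype ι] [Fintype κ]
    {A : Matrix ι ι K} {B : Matrix ι κ K} {C : Matrix κ κ K} {u : ι → K} (hu : u ᵥ* A = 0)
    (hker : ∀ ω, A *ᵥ ω = 0 → ∃ s : K, ω = s • u) {z : κ} (hz : (u ᵥ* B) z ≠ 0) :
    Fintype.card ι + 1 ≤ (fromBlocks A B Bᵀ C).rank := by
  set N := (fromBlocks A B Bᵀ C).submatrix (Sum.map id fun _ : Unit => z)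
    (Sum.map id fun _ : Unit => z)
  have hinj : Function.Injective N.mulVecLin := by
    rw [← LinearMap.ker_eq_bot, LinearMap.ker_eq_bot']
    intro v hv
    have hrow : A *ᵥ (v ∘ Sum.inl) + v (Sum.inr ()) • (fun i => B i z) = 0 := by
      ext i
      simpa [N, mulVec, dotProduct, Fintype.sum_sum_type, mul_comm] using congrFun hv (Sum.inl i)
    have hcol : (fun i => B i z) ⬝ᵥ (v ∘ Sum.inl) + C z z * v (Sum.inr ()) = 0 := by
      simpa [N, mulVec, dotProduct, Fintype.sum_sum_type] using congrFun hv (Sum.inr ())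
    have ht : v (Sum.inr ()) = 0 := by
      have := congrArg (u ⬝ᵥ ·) hrow
      simp only [dotProduct_add, dotProduct_mulVec, hu, zero_dotProduct, dotProduct_smul,
        zero_add, dotProduct_zero, smul_eq_mul] at this
      exact (mul_eq_zero.mp this).resolve_right hz
    obtain ⟨s, hs⟩ := hker (v ∘ Sum.inl) (by simpa [ht] using hrow)
    have hs0 : s = 0 := by
      rw [ht, mul_zero, add_zero, hs, dotProduct_smul, smul_eq_mul, dotProduct_comm] at hcol
      exact (mul_eq_zero.mp hcol).resolve_right hz
    ext (i | i)
    · simpa [hs0] using congrFun hs i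
    · exact ht
  have hN := LinearMap.finrank_range_of_inj hinj
  simp only [Module.finrank_fintype_fun_eq_card, Fintype.card_sum, Fintype.card_unit] at hN
  exact hN ▸ rank_submatrix_le _ _ _

end LinearAlgebra

/-- `(1, 0, -1, 0, 1, …)`: it spans the kernel of the adjacency matrix of a path with an odd
number of vertices. -/
def pathNull (m : ℕ) : ℝ := if Even m then (-1) ^ (m / 2) else 0

/-- Solves the rows `x (i - 1) + x (i + 1) = b i` of the path system, starting from `x 0 = 0`;
the last row holds as well once `b` is orthogonal to `pathNull`. -/
def pathSolve (b : ℕ → ℝ) : ℕ → ℝ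
  | 0 => 0
  | 1 => b 0
  | m + 2 => b (m + 1) - pathSolve b m

theorem pathNull_zero : pathNull 0 = 1 := by simp [pathNull]

theorem pathNull_eq_zero_iff {m : ℕ} : pathNull m = 0 ↔ Odd m := by
  by_cases h : Even m <;> simp [pathNull, h, Nat.not_even_iff_odd.mp, Nat.not_odd_iff_even.mpr]

theorem pathNull_two_mul (k : ℕ) : pathNull (2 * k) = (-1) ^ k := by simp [pathNull]

theorem pathNull_add_two (m : ℕ) : pathNull (m + 2) = -pathNull m := by
  rcases Nat.even_or_odd m with ⟨k, rfl⟩ | ⟨k, rfl⟩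
  · rw [← two_mul, pathNull_two_mul, show 2 * k + 2 = 2 * (k + 1) by ring, pathNull_two_mul,
      pow_succ, mul_neg_one]
  · rw [pathNull_eq_zero_iff.mpr ⟨k, rfl⟩, pathNull_eq_zero_iff.mpr ⟨k + 1, by ring⟩, neg_zero]

theorem sum_Icc_pathNull (a : ℕ) : ∑ i ∈ Icc a (a + 2), pathNull i = pathNull (a + 1) := by
  rw [show Icc a (a + 2) = {a, a + 1, a + 2} by ext; simp; omega, sum_insert (by simp),
    sum_insert (by simp), sum_singleton, pathNull_add_two]
  ring

theorem pathSolve_add_pathSolve_add_two (b : ℕ → ℝ) (m : ℕ) :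
    pathSolve b m + pathSolve b (m + 2) = b (m + 1) := by
  rw [pathSolve]; ring

theorem pathSolve_two_mul_add_one (b : ℕ → ℝ) (k : ℕ) :
    pathSolve b (2 * k + 1) = (-1) ^ k * ∑ i ∈ range (2 * k + 1), pathNull i * b i := by
  induction k with
  | zero => simp [pathSolve, pathNull_zero]
  | succ k ih =>
    rw [show 2 * (k + 1) + 1 = 2 * k + 1 + 2 by ring, pathSolve, ih, sum_range_succ _ (2 * k + 2),
      sum_range_succ _ (2 * k + 1), pathNull_eq_zero_iff.mpr ⟨k, rfl⟩,
      show 2 * k + 1 + 1 = 2 * (k + 1) by ring, pathNull_two_mul, pow_succ]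
    have hsq : ((-1 : ℝ) ^ k) ^ 2 = 1 := by rw [← pow_mul, Even.neg_one_pow ⟨k, by ring⟩]
    linear_combination -b (2 * (k + 1)) * hsq

theorem pathSolve_two_mul_add_one_of_sum_eq_zero {b : ℕ → ℝ} (k : ℕ)
    (hb : ∑ i ∈ range (2 * k + 3), pathNull i * b i = 0) :
    pathSolve b (2 * k + 1) = b (2 * k + 2) := by
  rw [sum_range_succ, sum_range_succ, pathNull_eq_zero_iff.mpr ⟨k, rfl⟩,
    show 2 * k + 2 = 2 * (k + 1) by ring, pathNull_two_mul, pow_succ] at hb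
  have hsq : ((-1 : ℝ) ^ k) ^ 2 = 1 := by rw [← pow_mul, Even.neg_one_pow ⟨k, by ring⟩]
  rw [pathSolve_two_mul_add_one, show 2 * k + 2 = 2 * (k + 1) by ring]
  linear_combination (-1 : ℝ) ^ k * hb + b (2 * (k + 1)) * hsq

theorem sum_range_mul_ite_mem (f : ℕ → ℝ) (S : Finset ℕ) (n : ℕ) :
    ∑ i ∈ range n, f i * (if i ∈ S then 1 else 0) = ∑ i ∈ range n ∩ S, f i := by
  simp only [mul_ite, mul_one, mul_zero, sum_ite_mem]

theorem sum_Icc_pathSolve_indicator_Icc {a b : ℕ} (ha : Even a) (hb : Even b) :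
    ∑ i ∈ Icc a (a + 2), pathSolve (fun j => if j ∈ Icc b (b + 2) then 1 else 0) i =
      if a = b then 2 else 0 := by
  obtain ⟨k, rfl⟩ := even_iff_two_dvd.mp ha
  obtain ⟨j, rfl⟩ := even_iff_two_dvd.mp hb
  set x := pathSolve (fun i => if i ∈ Icc (2 * j) (2 * j + 2) then 1 else 0) with hx
  have houter : x (2 * k) + x (2 * k + 2) = if 2 * k = 2 * j then 1 else 0 := by
    rw [hx, pathSolve_add_pathSolve_add_two]
    exact if_congr (by simp only [mem_Icc]; omega) rfl rfl
  have hmiddle : x (2 * k + 1) = if 2 * k = 2 * j then 1 else 0 := by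
    rw [hx, pathSolve_two_mul_add_one, sum_range_mul_ite_mem]
    rcases lt_trichotomy k j with h | rfl | h
    · rw [show range (2 * k + 1) ∩ Icc (2 * j) (2 * j + 2) = ∅ by ext; simp; omega,
        sum_empty, mul_zero, if_neg (by omega)]
    · rw [show range (2 * k + 1) ∩ Icc (2 * k) (2 * k + 2) = {2 * k} by ext; simp; omega,
        sum_singleton, pathNull_two_mul, if_pos rfl, ← mul_pow]
      norm_num
    · rw [show range (2 * k + 1) ∩ Icc (2 * j) (2 * j + 2) = Icc (2 * j) (2 * j + 2) by
          ext; simp; omega,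
        sum_Icc_pathNull, pathNull_eq_zero_iff.mpr ⟨j, rfl⟩, mul_zero, if_neg (by omega)]
  rw [show Icc (2 * k) (2 * k + 2) = {2 * k, 2 * k + 1, 2 * k + 2} by ext; simp; omega,
    sum_insert (by simp), sum_insert (by simp), sum_singleton,
    show x (2 * k) + (x (2 * k + 1) + x (2 * k + 2)) =
      (x (2 * k) + x (2 * k + 2)) + x (2 * k + 1) by ring, houter, hmiddle]
  split_ifs <;> norm_num

theorem eq_of_mem_of_subset_Icc {S : Finset ℕ} {a : ℕ} (ha : a ∈ S) (hS : S ⊆ Icc a (a + 2)) :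
    S = {a} ∨ S = {a, a + 1} ∨ S = {a, a + 2} ∨ S = Icc a (a + 2) := by
  have hmem : ∀ i ∈ S, i = a ∨ i = a + 1 ∨ i = a + 2 := fun i hi => by
    have := mem_Icc.mp (hS hi); omega
  by_cases h1 : a + 1 ∈ S <;> by_cases h2 : a + 2 ∈ S
  on_goal 1 => right; right; right
  on_goal 2 => right; left
  on_goal 3 => right; right; left
  on_goal 4 => left
  all_goals
    ext i
    simp only [mem_insert, mem_singleton, mem_Icc]
    constructor
    · intro hi
      rcases hmem i hi with rfl | rfl | rfl <;> first | omega | contradiction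
    · intro hi
      rcases (by omega : i = a ∨ i = a + 1 ∨ i = a + 2) with rfl | rfl | rfl <;>
        first | assumption | omega

theorem sum_pathSolve_indicator_self {S : Finset ℕ} {a : ℕ} (ha : a ∈ S)
    (hS : S ⊆ Icc a (a + 2)) (horth : ∑ i ∈ S, pathNull i = 0) (hcard : S.card ≠ 3) :
    ∑ i ∈ S, pathSolve (fun j => if j ∈ S then 1 else 0) i = 0 := by
  rcases eq_of_mem_of_subset_Icc ha hS with rfl | rfl | rfl | rfl
  · rw [sum_singleton] at horth ⊢
    obtain ⟨k, rfl⟩ := pathNull_eq_zero_iff.mp horth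
    rw [pathSolve_two_mul_add_one, sum_range_mul_ite_mem,
      show range (2 * k + 1) ∩ {2 * k + 1} = ∅ by ext; simp, sum_empty, mul_zero]
  · exfalso
    rw [sum_pair (by omega)] at horth
    rcases Nat.even_or_odd a with h | h
    · have h1 : pathNull (a + 1) = 0 := pathNull_eq_zero_iff.mpr h.add_one
      exact Nat.not_odd_iff_even.mpr h (pathNull_eq_zero_iff.mp (by linarith))
    · have h0 : pathNull a = 0 := pathNull_eq_zero_iff.mpr h
      exact Nat.not_odd_iff_even.mpr h.add_one (pathNull_eq_zero_iff.mp (by linarith))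
  · rw [sum_pair (by omega), pathSolve_add_pathSolve_add_two, if_neg (by simp)]
  · exact absurd (by rw [Nat.card_Icc]; omega) hcard

instance (n : ℕ) : DecidableRel (pathGraph n).Adj := fun _ _ =>
  decidable_of_iff' _ pathGraph_adj

section PathGraph
variable {d : ℕ}

theorem pathGraph_adjMatrix_mulVec_apply (x : ℕ → ℝ) (i : Fin (d + 1)) :
    ((pathGraph (d + 1)).adjMatrix ℝ *ᵥ fun j => x j) i =
      (if 0 < (i : ℕ) then x (i - 1) else 0) + (if (i : ℕ) < d then x (i + 1) else 0) := by
  have hsplit : ∀ j : ℕ, (if (i : ℕ) + 1 = j ∨ j + 1 = i then x j else 0) =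
      (if j = i + 1 then x j else 0) + (if 0 < (i : ℕ) ∧ j = i - 1 then x j else 0) := by
    intro j
    split_ifs <;> first | (exfalso; omega) | ring
  simp only [mulVec, dotProduct, adjMatrix_apply, pathGraph_adj, ite_mul, one_mul, zero_mul]
  rw [Fin.sum_univ_eq_sum_range (fun j => if (i : ℕ) + 1 = j ∨ j + 1 = i then x j else 0),
    sum_congr rfl fun j _ => hsplit j, sum_add_distrib, sum_ite_eq']
  have := i.isLt
  by_cases hi : 0 < (i : ℕ)
  · simp only [hi, true_and, sum_ite_eq', mem_range, if_true,
      if_pos (show (i : ℕ) - 1 < d + 1 by omega), add_lt_add_iff_right, add_comm]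
  · simp [hi]

theorem pathGraph_adjMatrix_mulVec_pathNull (hd : Even d) :
    (pathGraph (d + 1)).adjMatrix ℝ *ᵥ (fun j : Fin (d + 1) => pathNull j) = 0 := by
  ext i
  have := i.isLt
  rw [pathGraph_adjMatrix_mulVec_apply, Pi.zero_apply]
  split_ifs with h1 h2 h2
  · rw [show (i : ℕ) + 1 = (i - 1) + 2 by omega, pathNull_add_two, add_neg_cancel]
  · obtain ⟨k, hk⟩ := hd
    rw [pathNull_eq_zero_iff.mpr ⟨k - 1, by omega⟩, add_zero]
  · rw [show (i : ℕ) = 0 by omega, zero_add, zero_add, pathNull_eq_zero_iff.mpr odd_one]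
  · rw [add_zero]

theorem eq_mul_pathNull_of_mulVec_eq_zero {x : ℕ → ℝ}
    (h : (pathGraph (d + 1)).adjMatrix ℝ *ᵥ (fun j => x j) = 0) :
    ∀ m ≤ d, x m = x 0 * pathNull m := by
  have hrow (m : ℕ) (hm : m ≤ d) := congrFun h ⟨m, by omega⟩
  simp only [pathGraph_adjMatrix_mulVec_apply, Pi.zero_apply] at hrow
  intro m
  induction m using Nat.twoStepInduction with
  | zero => simp [pathNull_zero]
  | one =>
    intro h1
    have := hrow 0 (by omega)
    simp only [lt_irrefl, if_false, zero_add, if_pos (show 0 < d by omega)] at this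
    rw [this, pathNull_eq_zero_iff.mpr odd_one, mul_zero]
  | more m ih _ =>
    intro hm
    have := hrow (m + 1) (by omega)
    rw [if_pos (by omega), if_pos (by omega), Nat.add_sub_cancel] at this
    rw [pathNull_add_two, show x (m + 2) = -x m by linarith, ih (by omega), mul_neg]

theorem eq_smul_pathNull_of_mulVec_eq_zero {ω : Fin (d + 1) → ℝ}
    (h : (pathGraph (d + 1)).adjMatrix ℝ *ᵥ ω = 0) :
    ω = ω 0 • fun j : Fin (d + 1) => pathNull j := by
  set x : ℕ → ℝ := fun m => if hm : m < d + 1 then ω ⟨m, hm⟩ else 0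
  have hω : ω = fun j : Fin (d + 1) => x j := by
    ext j
    simp [x, Fin.is_le]
  ext j
  rw [hω] at h ⊢
  simpa using eq_mul_pathNull_of_mulVec_eq_zero h j (by omega)

theorem pathGraph_adjMatrix_mulVec_pathSolve (hd : Even d) {b : ℕ → ℝ}
    (hb : ∑ i ∈ range (d + 1), pathNull i * b i = 0) :
    (pathGraph (d + 1)).adjMatrix ℝ *ᵥ (fun j : Fin (d + 1) => pathSolve b j) =
      fun j : Fin (d + 1) => b j := by
  ext i
  have := i.isLt
  rw [pathGraph_adjMatrix_mulVec_apply]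
  split_ifs with h1 h2 h2
  · rw [show (i : ℕ) + 1 = (i - 1) + 2 by omega, pathSolve_add_pathSolve_add_two,
      Nat.sub_add_cancel h1]
  · obtain ⟨k, rfl⟩ := hd
    rw [add_zero, show (i : ℕ) - 1 = 2 * (k - 1) + 1 by omega,
      show (i : ℕ) = 2 * (k - 1) + 2 by omega]
    exact pathSolve_two_mul_add_one_of_sum_eq_zero _
      (by rwa [show 2 * (k - 1) + 3 = k + k + 1 by omega])
  · rw [show (i : ℕ) = 0 by omega, zero_add]
    rfl
  · simp_all [show d = 0 by omega, show (i : ℕ) = 0 by omega, pathNull_zero]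

theorem rank_pathGraph_adjMatrix (hd : Even d) : ((pathGraph (d + 1)).adjMatrix ℝ).rank = d := by
  have hker : LinearMap.ker ((pathGraph (d + 1)).adjMatrix ℝ).mulVecLin =
      Submodule.span ℝ {fun j : Fin (d + 1) => pathNull j} := by
    ext ω
    rw [LinearMap.mem_ker, mulVecLin_apply, Submodule.mem_span_singleton]
    constructor
    · exact fun h => ⟨ω 0, (eq_smul_pathNull_of_mulVec_eq_zero h).symm⟩
    · rintro ⟨s, rfl⟩
      rw [mulVec_smul, pathGraph_adjMatrix_mulVec_pathNull hd, smul_zero]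
  have hne : (fun j : Fin (d + 1) => pathNull j) ≠ 0 := fun h => by
    simpa [pathNull_zero] using congrFun h 0
  have := LinearMap.finrank_range_add_finrank_ker ((pathGraph (d + 1)).adjMatrix ℝ).mulVecLin
  rw [hker, finrank_span_singleton hne, Module.finrank_fin_fun] at this
  rw [rank]
  omega

end PathGraph

namespace SimpleGraph

section Geodesic

variable {V : Type*} {G : SimpleGraph V} {d : ℕ} {p : Fin (d + 1) → V}

structure IsGeodesicPath (G : SimpleGraph V) (p : Fin (d + 1) → V) : Prop where
  adj : ∀ i : Fin d, G.Adj (p i.castSucc) (p i.succ)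
  dist_eq : G.dist (p 0) (p (Fin.last d)) = d

namespace IsGeodesicPath

variable (hp : G.IsGeodesicPath p)
include hp

theorem reachable (i j : Fin (d + 1)) : G.Reachable (p i) (p j) := by
  have h0 (j : Fin (d + 1)) : G.Reachable (p 0) (p j) := by
    induction j using Fin.induction with
    | zero => rfl
    | succ j ih => exact ih.trans (hp.adj j).reachable
  exact (h0 i).symm.trans (h0 j)

theorem dist_le_sub {i j : Fin (d + 1)} (hij : i ≤ j) : G.dist (p i) (p j) ≤ (j : ℕ) - i := by
  induction j using Fin.induction with
  | zero => simp [Fin.le_zero_iff.mp hij]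
  | succ j ih =>
    rcases hij.eq_or_lt with rfl | hlt
    · simp
    have hle : i ≤ j.castSucc := Fin.le_castSucc_iff.mpr hlt
    calc G.dist (p i) (p j.succ) ≤ G.dist (p i) (p j.castSucc) + G.dist (p j.castSucc) (p j.succ) :=
          (hp.adj j).reachable.dist_triangle_right _
      _ ≤ ((j.castSucc : ℕ) - i) + 1 := by
          rw [dist_eq_one_iff_adj.mpr (hp.adj j)]
          exact Nat.add_le_add_right (ih hle) 1
      _ = (j.succ : ℕ) - i := by
          have : (i : ℕ) ≤ j := hle
          simp only [Fin.val_succ, Fin.val_castSucc]; omega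

theorem dist_eq_sub {i j : Fin (d + 1)} (hij : i ≤ j) : G.dist (p i) (p j) = (j : ℕ) - i := by
  have h1 := hp.dist_le_sub (Fin.zero_le i)
  have h2 := hp.dist_le_sub (Fin.le_last j)
  have t1 := (hp.reachable 0 i).dist_triangle_left (p (Fin.last d))
  have t2 := (hp.reachable i j).dist_triangle_left (p (Fin.last d))
  have := hp.dist_le_sub hij
  have := hp.dist_eq
  simp only [Fin.val_zero, Fin.val_last] at h1 h2
  have : (i : ℕ) ≤ j := hij
  omega

theorem injective : Function.Injective p := by
  have key {i j : Fin (d + 1)} (h : i ≤ j) (e : p i = p j) : i = j := by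
    have := hp.dist_eq_sub h
    rw [e, dist_self] at this
    exact Fin.ext (by have : (i : ℕ) ≤ j := h; omega)
  intro i j e
  rcases le_total i j with h | h
  exacts [key h e, (key h e.symm).symm]

theorem adj_iff {i j : Fin (d + 1)} : G.Adj (p i) (p j) ↔ (pathGraph (d + 1)).Adj i j := by
  rw [← dist_eq_one_iff_adj, pathGraph_adj]
  rcases le_total i j with h | h
  · rw [hp.dist_eq_sub h]
    have : (i : ℕ) ≤ j := h
    omega
  · rw [dist_comm, hp.dist_eq_sub h]
    have : (j : ℕ) ≤ i := h
    omega

theorem le_add_two_of_adj {z : V} {i j : Fin (d + 1)} (hi : G.Adj z (p i)) (hj : G.Adj z (p j)) :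
    (j : ℕ) ≤ i + 2 := by
  rcases le_total i j with h | h
  · have := hp.dist_eq_sub h
    have t := hi.symm.reachable.dist_triangle_left (p j)
    rw [dist_eq_one_iff_adj.mpr hi.symm, dist_eq_one_iff_adj.mpr hj] at t
    omega
  · exact le_trans h (Nat.le_add_right _ _)

end IsGeodesicPath

end Geodesic

section PathNeighbors

variable {V : Type*} {G : SimpleGraph V} [DecidableRel G.Adj] {d : ℕ} {p : Fin (d + 1) → V}

variable (G p) in
def pathNeighbors (z : V) : Finset ℕ :=
  (univ.filter fun i : Fin (d + 1) => G.Adj z (p i)).map Fin.valEmbedding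

theorem mem_pathNeighbors {z : V} {m : ℕ} :
    m ∈ pathNeighbors G p z ↔ ∃ i : Fin (d + 1), G.Adj z (p i) ∧ (i : ℕ) = m := by
  simp [pathNeighbors]

theorem coe_mem_pathNeighbors {z : V} {i : Fin (d + 1)} :
    (i : ℕ) ∈ pathNeighbors G p z ↔ G.Adj z (p i) := by
  simp [pathNeighbors, Fin.val_inj]

theorem pathNeighbors_subset_range (z : V) : pathNeighbors G p z ⊆ range (d + 1) := by
  intro m hm
  obtain ⟨i, -, rfl⟩ := mem_pathNeighbors.mp hm
  exact mem_range.mpr i.isLt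

theorem card_pathNeighbors (z : V) :
    (pathNeighbors G p z).card = (univ.filter fun i : Fin (d + 1) => G.Adj z (p i)).card :=
  card_map _

theorem sum_fin_mul_ite_mem_pathNeighbors (f : ℕ → ℝ) (z : V) :
    ∑ i : Fin (d + 1), f i * (if (i : ℕ) ∈ pathNeighbors G p z then 1 else 0) =
      ∑ i ∈ pathNeighbors G p z, f i := by
  rw [Fin.sum_univ_eq_sum_range (fun i => f i * if i ∈ pathNeighbors G p z then 1 else 0),
    sum_range_mul_ite_mem, inter_eq_right.mpr (pathNeighbors_subset_range _)]

theorem IsGeodesicPath.pathNeighbors_subset_Icc (hp : G.IsGeodesicPath p) {z : V} {a : ℕ}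
    (ha : a ∈ pathNeighbors G p z) (hmin : ∀ m ∈ pathNeighbors G p z, a ≤ m) :
    pathNeighbors G p z ⊆ Icc a (a + 2) := by
  intro m hm
  obtain ⟨i, hi, rfl⟩ := mem_pathNeighbors.mp ha
  obtain ⟨j, hj, rfl⟩ := mem_pathNeighbors.mp hm
  exact mem_Icc.mpr ⟨hmin _ hm, hp.le_add_two_of_adj hi hj⟩

end PathNeighbors

section SchurComplement

open scoped Classical

variable {V : Type} {G : SimpleGraph V} [DecidableRel G.Adj] {d : ℕ} {p : Fin (d + 1) → V}

theorem adjMatrix_submatrix_val_apply (i : Fin (d + 1)) (z : {v // v ∉ Set.range p}) :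
    (G.adjMatrix ℝ).submatrix p Subtype.val i z =
      if (i : ℕ) ∈ pathNeighbors G p z then 1 else 0 := by
  simp [coe_mem_pathNeighbors, adjMatrix_apply, G.adj_comm]

variable (G p) in
def pathSolveMatrix : Matrix (Fin (d + 1)) {v // v ∉ Set.range p} ℝ :=
  of fun i z => pathSolve (fun j => if j ∈ pathNeighbors G p z then 1 else 0) i

variable (G p) in
def schur : Matrix {v // v ∉ Set.range p} {v // v ∉ Set.range p} ℝ :=
  (G.adjMatrix ℝ).submatrix Subtype.val Subtype.val -
    (pathSolveMatrix G p)ᵀ * (pathGraph (d + 1)).adjMatrix ℝ * pathSolveMatrix G p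

theorem pathGraph_adjMatrix_mul_pathSolveMatrix (hd : Even d)
    (horth : ∀ z : {v // v ∉ Set.range p}, ∑ i ∈ pathNeighbors G p z, pathNull i = 0) :
    (pathGraph (d + 1)).adjMatrix ℝ * pathSolveMatrix G p =
      (G.adjMatrix ℝ).submatrix p Subtype.val := by
  ext i z
  rw [adjMatrix_submatrix_val_apply]
  have hb : ∑ i ∈ range (d + 1), pathNull i * (if i ∈ pathNeighbors G p z then 1 else 0) = 0 := by
    rw [sum_range_mul_ite_mem, inter_eq_right.mpr (pathNeighbors_subset_range _), horth z]
  exact congrFun (pathGraph_adjMatrix_mulVec_pathSolve hd hb) i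

theorem schur_apply (hd : Even d)
    (horth : ∀ z : {v // v ∉ Set.range p}, ∑ i ∈ pathNeighbors G p z, pathNull i = 0)
    (z w : {v // v ∉ Set.range p}) :
    schur G p z w = (if G.Adj z w then 1 else 0) -
      ∑ i ∈ pathNeighbors G p w,
        pathSolve (fun j => if j ∈ pathNeighbors G p z then 1 else 0) i := by
  rw [schur, Matrix.mul_assoc, pathGraph_adjMatrix_mul_pathSolveMatrix hd horth, Matrix.sub_apply,
    submatrix_apply, adjMatrix_apply, mul_apply]
  simp only [transpose_apply, adjMatrix_submatrix_val_apply, pathSolveMatrix, of_apply,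
    sum_fin_mul_ite_mem_pathNeighbors]

theorem schur_apply_of_eq_Icc (hd : Even d)
    (horth : ∀ z : {v // v ∉ Set.range p}, ∑ i ∈ pathNeighbors G p z, pathNull i = 0)
    {z w : {v // v ∉ Set.range p}} {a b : ℕ} (ha : Even a) (hb : Even b)
    (hz : pathNeighbors G p z = Icc a (a + 2)) (hw : pathNeighbors G p w = Icc b (b + 2)) :
    schur G p z w = (if G.Adj z w then 1 else 0) - if b = a then 2 else 0 := by
  rw [schur_apply hd horth, hz, hw, sum_Icc_pathSolve_indicator_Icc hb ha]

theorem schur_transpose : (schur G p)ᵀ = schur G p := by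
  rw [schur, transpose_sub, transpose_submatrix, transpose_adjMatrix, transpose_mul, transpose_mul,
    transpose_transpose, transpose_adjMatrix, Matrix.mul_assoc]

theorem IsGeodesicPath.schur_self_eq_zero (hp : G.IsGeodesicPath p) (hd : Even d)
    (horth : ∀ z : {v // v ∉ Set.range p}, ∑ i ∈ pathNeighbors G p z, pathNull i = 0)
    (z : {v // v ∉ Set.range p}) (hz : (pathNeighbors G p z).card ≠ 3) : schur G p z z = 0 := by
  rw [schur_apply hd horth, if_neg (G.irrefl), zero_sub, neg_eq_zero]
  rcases (pathNeighbors G p z).eq_empty_or_nonempty with h | hne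
  · rw [h, sum_empty]
  · exact sum_pathSolve_indicator_self (min'_mem _ hne)
      (hp.pathNeighbors_subset_Icc (min'_mem _ hne) fun m hm => min'_le _ m hm) (horth z) hz

theorem IsGeodesicPath.pathNeighbors_eq_Icc (hp : G.IsGeodesicPath p) {z : V}
    (horth : ∑ i ∈ pathNeighbors G p z, pathNull i = 0) (hz : (pathNeighbors G p z).card = 3) :
    ∃ a, Even a ∧ pathNeighbors G p z = Icc a (a + 2) := by
  have hne : (pathNeighbors G p z).Nonempty := card_pos.mp (by omega)
  have heq := eq_of_subset_of_card_le
    (hp.pathNeighbors_subset_Icc (min'_mem _ hne) fun m hm => min'_le _ m hm)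
    (by rw [Nat.card_Icc, hz]; omega)
  refine ⟨_, ?_, heq⟩
  rw [heq, sum_Icc_pathNull, pathNull_eq_zero_iff] at horth
  exact Nat.not_odd_iff_even.mp (Nat.odd_add_one.mp horth)

variable [Fintype V]

theorem adjMat_eq_adjMatrix (G : SimpleGraph V) [DecidableRel G.Adj] :
    adjMat G = G.adjMatrix ℝ := by
  ext v w
  simp [adjMat, adjMatrix_apply]

theorem nullity_add_rank_adjMatrix (G : SimpleGraph V) [DecidableRel G.Adj] :
    nullity G + (G.adjMatrix ℝ).rank = Fintype.card V := by
  rw [nullity, adjMat_eq_adjMatrix, rank, add_comm, LinearMap.finrank_range_add_finrank_ker,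
    Module.finrank_fintype_fun_eq_card]

theorem IsGeodesicPath.rank_adjMatrix_eq_of_nullity (hp : G.IsGeodesicPath p)
    (hnull : nullity G = Fintype.card V - d - 1) : (G.adjMatrix ℝ).rank = d + 1 := by
  have := nullity_add_rank_adjMatrix G
  have := Fintype.card_fin (d + 1) ▸ Fintype.card_le_of_injective p hp.injective
  omega

theorem IsGeodesicPath.rank_adjMatrix (hp : G.IsGeodesicPath p) :
    (G.adjMatrix ℝ).rank =
      (fromBlocks ((pathGraph (d + 1)).adjMatrix ℝ)
        ((G.adjMatrix ℝ).submatrix p (Subtype.val : {v // v ∉ Set.range p} → V))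
        ((G.adjMatrix ℝ).submatrix p (Subtype.val : {v // v ∉ Set.range p} → V))ᵀ
        ((G.adjMatrix ℝ).submatrix Subtype.val
          (Subtype.val : {v // v ∉ Set.range p} → V))).rank := by
  let e : Fin (d + 1) ⊕ {v // v ∉ Set.range p} ≃ V :=
    (Equiv.sumCongr (Equiv.ofInjective p hp.injective) (Equiv.refl _)).trans
      (Equiv.sumCompl (· ∈ Set.range p))
  rw [← rank_submatrix _ e e]
  congr 1
  ext (i | z) (j | w) <;> simp [e, adjMatrix_apply, hp.adj_iff, G.adj_comm]

theorem IsGeodesicPath.sum_pathNeighbors_pathNull_eq_zero (hp : G.IsGeodesicPath p) (hd : Even d)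
    (hrank : (G.adjMatrix ℝ).rank = d + 1) (z : {v // v ∉ Set.range p}) :
    ∑ i ∈ pathNeighbors G p z, pathNull i = 0 := by
  by_contra hz
  have hu : (fun j : Fin (d + 1) => pathNull j) ᵥ* (pathGraph (d + 1)).adjMatrix ℝ = 0 := by
    rw [← mulVec_transpose, transpose_adjMatrix, pathGraph_adjMatrix_mulVec_pathNull hd]
  have hz' : ((fun j : Fin (d + 1) => pathNull j) ᵥ*
      (G.adjMatrix ℝ).submatrix p Subtype.val) z ≠ 0 := by
    simpa only [vecMul, dotProduct, adjMatrix_submatrix_val_apply,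
      sum_fin_mul_ite_mem_pathNeighbors] using hz
  have := card_add_one_le_rank_fromBlocks hu
    (fun ω hω => ⟨ω 0, eq_smul_pathNull_of_mulVec_eq_zero hω⟩) hz'
    (C := (G.adjMatrix ℝ).submatrix Subtype.val Subtype.val)
  rw [← hp.rank_adjMatrix, hrank, Fintype.card_fin] at this
  omega

theorem IsGeodesicPath.rank_schur (hp : G.IsGeodesicPath p) (hd : Even d)
    (hrank : (G.adjMatrix ℝ).rank = d + 1) : (schur G p).rank = 1 := by
  have hX := pathGraph_adjMatrix_mul_pathSolveMatrix hd
    (hp.sum_pathNeighbors_pathNull_eq_zero hd hrank)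
  rw [hp.rank_adjMatrix, ← hX, transpose_mul, transpose_adjMatrix, rank_fromBlocks_mul,
    rank_pathGraph_adjMatrix hd, ← schur] at hrank
  omega

theorem IsGeodesicPath.exists_card_pathNeighbors_eq_three (hp : G.IsGeodesicPath p) (hd : Even d)
    (hrank : (G.adjMatrix ℝ).rank = d + 1) :
    ∃ z : {v // v ∉ Set.range p}, (pathNeighbors G p z).card = 3 := by
  have hrk := hp.rank_schur hd hrank
  by_contra! h
  have hdiag z := hp.schur_self_eq_zero hd (hp.sum_pathNeighbors_pathNull_eq_zero hd hrank) z (h z)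
  have hzero : schur G p = 0 := by
    ext z w
    have := mul_eq_mul_of_rank_le_one hrk.le z w z w
    rw [hdiag, hdiag, zero_mul, ← transpose_apply (schur G p) z w, schur_transpose] at this
    exact mul_self_eq_zero.mp this.symm
  rw [hzero, rank_zero] at hrk
  exact zero_ne_one hrk

theorem IsGeodesicPath.eq_of_card_pathNeighbors_eq_three (hp : G.IsGeodesicPath p) (hd : Even d)
    (hrank : (G.adjMatrix ℝ).rank = d + 1)
    (hreduced : ∀ a b : V, G.neighborSet a = G.neighborSet b → a = b)
    {z w : {v // v ∉ Set.range p}} (hz : (pathNeighbors G p z).card = 3)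
    (hw : (pathNeighbors G p w).card = 3) : z = w := by
  have horth := hp.sum_pathNeighbors_pathNull_eq_zero hd hrank
  have hminor := mul_eq_mul_of_rank_le_one (hp.rank_schur hd hrank).le
  obtain ⟨a, ha, hNz⟩ := hp.pathNeighbors_eq_Icc (horth z) hz
  obtain ⟨b, hb, hNw⟩ := hp.pathNeighbors_eq_Icc (horth w) hw
  have hzz : schur G p z z = -2 := by
    rw [schur_apply_of_eq_Icc hd horth ha ha hNz hNz, if_neg (G.irrefl), if_pos rfl]; norm_num
  have hww : schur G p w w = -2 := by
    rw [schur_apply_of_eq_Icc hd horth hb hb hNw hNw, if_neg (G.irrefl), if_pos rfl]; norm_num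
  have hab : a = b ∧ schur G p z w = -2 := by
    have := hminor z w z w
    rw [hzz, hww, ← transpose_apply (schur G p) z w, schur_transpose,
      schur_apply_of_eq_Icc hd horth ha hb hNz hNw] at this
    rw [schur_apply_of_eq_Icc hd horth ha hb hNz hNw]
    by_cases hadj : G.Adj z w <;> by_cases hab : b = a <;> simp_all <;> norm_num at this
  have hcol (c : {v // v ∉ Set.range p}) : schur G p c z = schur G p c w := by
    have := hminor c z z w
    rw [hzz, hab.2] at this
    linarith
  apply Subtype.ext
  apply hreduced
  ext v
  simp only [mem_neighborSet]
  by_cases hv : v ∈ Set.range p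
  · obtain ⟨i, rfl⟩ := hv
    rw [← coe_mem_pathNeighbors, ← coe_mem_pathNeighbors, hNz, hNw, hab.1]
  · have := hcol ⟨v, hv⟩
    rw [schur_apply hd horth, schur_apply hd horth, hNz, hNw, hab.1, sub_left_inj] at this
    rw [G.adj_comm z v, G.adj_comm w v]
    by_cases h1 : G.Adj v z <;> by_cases h2 : G.Adj v w <;> simp [h1, h2] at this ⊢

end SchurComplement

end SimpleGraph

theorem stmt17_general {V : Type} [Fintype V] (G : SimpleGraph V) [DecidableRel G.Adj]
    (heven : Even G.diam)
    (hreduced : ∀ a b : V, G.neighborSet a = G.neighborSet b → a = b)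
    (p : Fin (G.diam + 1) → V)
    (hadj : ∀ i : Fin G.diam, G.Adj (p i.castSucc) (p i.succ))
    (hdist : G.dist (p 0) (p (Fin.last G.diam)) = G.diam)
    (hnull : nullity G = Fintype.card V - G.diam - 1) :
    ∃! z : V, z ∉ Set.range p ∧
      (Finset.univ.filter fun i : Fin (G.diam + 1) => G.Adj z (p i)).card = 3 := by
  have hp : G.IsGeodesicPath p := ⟨hadj, hdist⟩
  have hrank := hp.rank_adjMatrix_eq_of_nullity hnull
  obtain ⟨z, hz⟩ := hp.exists_card_pathNeighbors_eq_three heven hrank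
  refine ⟨z, ⟨z.2, by rwa [← card_pathNeighbors]⟩, fun y ⟨hy, hy3⟩ => ?_⟩
  exact congrArg Subtype.val (hp.eq_of_card_pathNeighbors_eq_three heven hrank hreduced
    (z := ⟨y, hy⟩) (by rwa [card_pathNeighbors]) hz)

/-- Let `G` be connected, twin-free, with even diameter `d`, let `p 0 ∼ ⋯ ∼ p d` be
a diameter path, and suppose `η(G) = n - d - 1`. Then there is exactly one vertex
of `G` outside the path having exactly three neighbours on the path. -/
theorem stmt17 {V : Type} [Fintype V] (G : SimpleGraph V) [DecidableRel G.Adj]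
    (hG : G.Connected) (heven : Even G.diam)
    (hreduced : ∀ a b : V, G.neighborSet a = G.neighborSet b → a = b)
    (p : Fin (G.diam + 1) → V)
    (hadj : ∀ i : Fin G.diam, G.Adj (p i.castSucc) (p i.succ))
    (hdist : G.dist (p 0) (p (Fin.last G.diam)) = G.diam)
    (hnull : nullity G = Fintype.card V - G.diam - 1) :
    ∃! z : V, z ∉ Set.range p ∧
      (Finset.univ.filter fun i : Fin (G.diam + 1) => G.Adj z (p i)).card = 3 :=
  stmt17_general G heven hreduced p hadj hdist hnull
end
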